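/- arXiv:0911.2774 — 8 statements merged into one kernel-verified Lean document; each statement's English description precedes it below -/
import Mathlib

section
/- Let κ be an infinite cardinal and α an ordinal with ω₁ ≤ κ = |α|. Then there exists a function h : κ → α such that h[κ] = α and for every cardinal κ' with ω₁ ≤ κ' < κ, κ' ⊆ h[κ'] (identifying κ' with the set of ordinals below it). -/
/-! Write every ordinal as `ν = 2 * q + r` with `r < 2`. Let `h` send `2 * q` to `q` and
`2 * q + 1` to `g q`, where `g` maps `κ.ord` onto `α`. The odd places make `h` onto `α`, and
since every infinite initial ordinal `κ'.ord` is closed under `q ↦ 2 * q + 1`, the even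
places alone already cover `κ'.ord` inside `κ'.ord`. -/

open Cardinal Ordinal Set

noncomputable def interleave (g : Ordinal → Ordinal) (ν : Ordinal) : Ordinal :=
  if ν % 2 = 0 then ν / 2 else g (ν / 2)

theorem interleave_two_mul (g : Ordinal → Ordinal) (o : Ordinal) : interleave g (2 * o) = o := by
  simp [interleave, Ordinal.mul_div_cancel _ two_ne_zero]

theorem interleave_two_mul_add_one (g : Ordinal → Ordinal) (o : Ordinal) :
    interleave g (2 * o + 1) = g o := by
  have hmod : (2 * o + 1) % 2 = 1 := by
    rw [mul_add_mod_self, mod_eq_of_lt one_lt_two]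
  have hdiv : (2 * o + 1) / 2 = o := by
    rw [mul_add_div _ two_ne_zero, div_eq_zero_of_lt one_lt_two, add_zero]
  simp [interleave, hmod, hdiv]

theorem Ordinal.div_two_le_self (ν : Ordinal) : ν / 2 ≤ ν :=
  calc ν / 2 ≤ 2 * (ν / 2) := le_mul_right _ two_pos
    _ ≤ 2 * (ν / 2) + ν % 2 := le_self_add
    _ = ν := div_add_mod ν 2

theorem interleave_lt {g : Ordinal → Ordinal} {a b ν : Ordinal} (hg : MapsTo g (Iio a) (Iio b))
    (hab : a ≤ b) (hν : ν < a) : interleave g ν < b := by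
  have hhalf : ν / 2 < a := (div_two_le_self ν).trans_lt hν
  unfold interleave
  split_ifs
  · exact hhalf.trans_le hab
  · exact hg hhalf

theorem Cardinal.two_mul_add_one_lt_ord {c : Cardinal} (hc : ℵ₀ ≤ c) {o : Ordinal}
    (ho : o < c.ord) : 2 * o + 1 < c.ord := by
  have hω : ω ≤ c.ord := omega0_le_ord.mpr hc
  have hone : (1 : Ordinal) < c.ord := (one_lt_omega0).trans_le hω
  have htwo : (2 : Ordinal) < c.ord := (natCast_lt_omega0 2).trans_le hω
  exact isPrincipal_add_ord hc (isPrincipal_mul_ord hc htwo ho) hone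

theorem exists_mapsTo_surjOn_Iio_of_card_eq {a b : Ordinal} (h : a.card = b.card) :
    ∃ g : Ordinal → Ordinal, MapsTo g (Iio a) (Iio b) ∧ SurjOn g (Iio a) (Iio b) := by
  obtain ⟨e⟩ : Nonempty (Iio a ≃ Iio b) := Cardinal.eq.mp (by simp [h])
  refine ⟨Function.extend Subtype.val (fun x => (e x : Ordinal)) 0,
    fun ν hν => ?_, fun β hβ => ?_⟩
  · rw [show ν = ((⟨ν, hν⟩ : Iio a) : Ordinal) from rfl, Subtype.val_injective.extend_apply]
    exact (e _).2
  · refine ⟨e.symm ⟨β, hβ⟩, (e.symm _).2, ?_⟩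
    simp

theorem stmt_0 (κ : Cardinal) (α : Ordinal) (h1 : Cardinal.aleph 1 ≤ κ)
    (h2 : α.card = κ) :
    ∃ h : Ordinal → Ordinal,
      (∀ ν < κ.ord, h ν < α) ∧
      (∀ β < α, ∃ ν < κ.ord, h ν = β) ∧
      (∀ κ' : Cardinal, Cardinal.aleph 1 ≤ κ' → κ' < κ →
        ∀ β < κ'.ord, ∃ ν < κ'.ord, h ν = β) := by
  obtain ⟨g, hmaps, hsurj⟩ := exists_mapsTo_surjOn_Iio_of_card_eq (a := κ.ord) (b := α)
    (by rw [card_ord, h2])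
  refine ⟨interleave g, fun ν hν => interleave_lt hmaps (h2 ▸ ord_card_le α) hν, ?_, ?_⟩
  · intro β hβ
    obtain ⟨μ, hμ, rfl⟩ := hsurj hβ
    exact ⟨2 * μ + 1, two_mul_add_one_lt_ord ((aleph0_le_aleph 1).trans h1) hμ,
      interleave_two_mul_add_one g μ⟩
  · intro κ' h1' _ β hβ
    have hβ' := two_mul_add_one_lt_ord ((aleph0_le_aleph 1).trans h1') hβ
    exact ⟨2 * β, le_self_add.trans_lt hβ', interleave_two_mul g β⟩
end

section
/- Let μ be any cardinal and κ an infinite cardinal. Let X be a set with |X| ≤ μ and let H be a family of subsets of X, each of cardinality at most κ, such that every point of X belongs to at least κ members of H (counted with multiplicity via an indexing). Then there is a coloring c : H → κ such that for every x ∈ X and every color γ < κ, some set H ∈ H containing x has c(H) = γ. -/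
/-!
Choose for every point `x` a set `T x` of exactly `κ` indices of members containing `x`, and call
`x` and `y` adjacent when `T x` and `T y` meet. Every point has at most `κ` neighbours, so every
connected component has at most `κ` points. Within a component, a greedy transfinite choice along a
well-order of type `κ.ord` picks pairwise distinct indices `i(x, γ) ∈ T x` for all pairs `(x, γ)`,
and `i(x, γ)` gets colour `γ`. An index lies in `T x` only for `x` in a single component, so the
colourings of the components combine.
-/

open Cardinal

universe u

theorem mk_iUnion_nat_le {α : Type u} {c : Cardinal.{u}} (hc : ℵ₀ ≤ c) (A : ℕ → Set α)
    (hA : ∀ n, #(A n) ≤ c) : #(⋃ n, A n) ≤ c := by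
  have := mk_iUnion_le_lift A
  simp only [lift_uzero, mk_nat, lift_aleph0] at this
  calc #(⋃ n, A n) ≤ ℵ₀ * ⨆ n, #(A n) := this
    _ ≤ ℵ₀ * c := by gcongr; exact ciSup_le' hA
    _ = c := aleph0_mul_eq hc

theorem mk_biUnion_le_of_mk_le {ι α : Type u} {c : Cardinal.{u}} (hc : ℵ₀ ≤ c) {s : Set ι}
    (hs : #s ≤ c) (A : ι → Set α) (hA : ∀ i ∈ s, #(A i) ≤ c) : #(⋃ i ∈ s, A i) ≤ c :=
  calc #(⋃ i ∈ s, A i) ≤ #s * ⨆ i : s, #(A i) := mk_biUnion_le A s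
    _ ≤ c * c := by gcongr; exact ciSup_le' fun i => hA i i.2
    _ = c := mul_eq_self hc

theorem mk_setOf_reflTransGen_le {X : Type u} {κ : Cardinal.{u}} (hκ : ℵ₀ ≤ κ)
    {r : X → X → Prop} (hr : ∀ x, #{y | r x y} ≤ κ) (x : X) :
    #{y | Relation.ReflTransGen r x y} ≤ κ := by
  let step (s : Set X) : Set X := ⋃ y ∈ s, {z | r y z}
  have hstep : ∀ n, #(step^[n] {x}) ≤ κ := by
    intro n
    induction n with
    | zero => simpa using one_le_aleph0.trans hκ
    | succ n ih =>
      rw [Function.iterate_succ_apply']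
      exact mk_biUnion_le_of_mk_le hκ ih _ fun y _ => hr y
  refine (mk_le_mk_of_subset fun y hy => ?_).trans (mk_iUnion_nat_le hκ _ hstep)
  induction hy with
  | refl => exact Set.mem_iUnion.mpr ⟨0, rfl⟩
  | tail _ hyz ih =>
    obtain ⟨n, hn⟩ := Set.mem_iUnion.mp ih
    refine Set.mem_iUnion.mpr ⟨n + 1, ?_⟩
    rw [Function.iterate_succ_apply']
    exact Set.mem_biUnion hn hyz

theorem exists_injective_forall_mem {P ι : Type u} {κ : Cardinal.{u}} (hP : #P ≤ κ)
    (T : P → Set ι) (hT : ∀ p, κ ≤ #(T p)) :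
    ∃ f : P → ι, Function.Injective f ∧ ∀ p, f p ∈ T p := by
  obtain ⟨e⟩ : Nonempty (P ↪ κ.ord.ToType) := by rwa [← le_def, mk_toType, card_ord]
  let : LinearOrder P := LinearOrder.lift' e e.injective
  have hwf : WellFounded ((· < ·) : P → P → Prop) := InvImage.wf e wellFounded_lt
  have fresh : ∀ p (g : Set.Iio p → ι), ∃ i ∈ T p, i ∉ Set.range g := by
    intro p g
    by_contra! h
    have hIio : #(Set.Iio p) < κ :=
      calc #(Set.Iio p) ≤ #(Set.Iio (e p)) :=
            mk_le_of_injective (f := fun q => ⟨e q, q.2⟩) fun a b h =>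
              Subtype.ext (e.injective (congrArg Subtype.val h))
        _ < κ := by simpa using mk_Iio_lt (e p) (by simp)
    exact ((hT p).trans ((mk_le_mk_of_subset h).trans mk_range_le)).not_gt hIio
  let f : P → ι := hwf.fix fun p g => (fresh p fun q => g q q.2).choose
  have hf : ∀ p, f p ∈ T p ∧ ∀ q < p, f q ≠ f p := by
    intro p
    have hfix : f p = (fresh p fun q => f q).choose := hwf.fix_eq _ p
    obtain ⟨hmem, hnew⟩ := (fresh p fun q => f q).choose_spec
    rw [← hfix] at hmem hnew
    exact ⟨hmem, fun q hq h => hnew ⟨⟨q, hq⟩, h⟩⟩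
  exact ⟨f, Function.Injective.of_lt_imp_ne fun q p hqp => (hf p).2 q hqp, fun p => (hf p).1⟩

theorem exists_coloring_of_mk_le {S ι C : Type u} {κ : Cardinal.{u}} (hκ : ℵ₀ ≤ κ)
    (hS : #S ≤ κ) (hC : #C ≤ κ) [Nonempty C] (T : S → Set ι) (hT : ∀ s, κ ≤ #(T s)) :
    ∃ c : ι → C, ∀ s γ, ∃ i ∈ T s, c i = γ := by
  have hSC : #(S × C) ≤ κ :=
    calc #(S × C) = #S * #C := by rw [mk_prod, lift_id, lift_id]
      _ ≤ κ * κ := by gcongr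
      _ = κ := mul_eq_self hκ
  obtain ⟨f, hf, hfT⟩ := exists_injective_forall_mem hSC (fun p => T p.1) fun p => hT p.1
  -- `f (s, γ)` is the member of `T s` reserved for colour `γ`
  refine ⟨Function.extend f Prod.snd fun _ => Classical.arbitrary C, fun s γ => ?_⟩
  exact ⟨f (s, γ), hfT (s, γ), hf.extend_apply _ _ (s, γ)⟩

theorem exists_coloring_of_cover {X ι C : Type u} {κ : Cardinal.{u}} (hκ : ℵ₀ ≤ κ)
    (A : ι → Set X) (hsize : ∀ i, #(A i) ≤ κ) (hcov : ∀ x, κ ≤ #{i | x ∈ A i})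
    (hC : #C ≤ κ) [Nonempty C] :
    ∃ c : ι → C, ∀ x γ, ∃ i, x ∈ A i ∧ c i = γ := by
  classical
  choose T hTA hT using fun x => le_mk_iff_exists_subset.mp (hcov x)
  let r (x y : X) : Prop := (T x ∩ T y).Nonempty
  have hdeg : ∀ x, #{y | r x y} ≤ κ := fun x =>
    calc #{y | r x y} ≤ #(⋃ i ∈ T x, A i) := mk_le_mk_of_subset fun y ⟨i, hix, hiy⟩ =>
          Set.mem_biUnion hix (hTA y hiy)
      _ ≤ κ := mk_biUnion_le_of_mk_le hκ (hT x).le A fun i _ => hsize i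
  have : Std.Symm r := ⟨fun x y ⟨i, hix, hiy⟩ => ⟨i, hiy, hix⟩⟩
  have hcomp : ∀ q : Quot r, #{x // Quot.mk r x = q} ≤ κ := by
    refine Quot.ind fun x => (mk_le_mk_of_subset fun y hy => ?_).trans
      (mk_setOf_reflTransGen_le hκ hdeg x)
    rw [Set.mem_ofPred_eq, ← Relation.EqvGen.eqvGen_eq_reflTransGen]
    exact Quot.eqvGen_exact hy.symm
  choose F hF using fun q => exists_coloring_of_mk_le hκ (hcomp q) hC (fun x => T x.1)
    fun x => (hT x.1).ge
  refine ⟨fun i => if h : ∃ x, i ∈ T x then F (Quot.mk r h.choose) i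
    else Classical.arbitrary C, fun x γ => ?_⟩
  obtain ⟨i, hix, hiγ⟩ := hF (Quot.mk r x) ⟨x, rfl⟩ γ
  have h : ∃ x, i ∈ T x := ⟨x, hix⟩
  have hclass : Quot.mk r h.choose = Quot.mk r x := Quot.sound ⟨i, h.choose_spec, hix⟩
  exact ⟨i, hTA x hix, by simp only [dif_pos h, hclass, hiγ]⟩

theorem stmt_1_general {X ι : Type u} (κ : Cardinal.{u}) (hκ : ℵ₀ ≤ κ)
    (A : ι → Set X) (hsize : ∀ i, #(A i) ≤ κ)
    (hcov : ∀ x : X, κ ≤ #{i | x ∈ A i}) :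
    ∃ c : ι → Ordinal, (∀ i, c i < κ.ord) ∧
      ∀ x : X, ∀ γ < κ.ord, ∃ i, x ∈ A i ∧ c i = γ := by
  have : Nonempty κ.ord.ToType := nonempty_ord_toType (aleph0_pos.trans_le hκ).ne'
  obtain ⟨c, hc⟩ := exists_coloring_of_cover hκ A hsize hcov (C := κ.ord.ToType)
    (by rw [mk_toType, card_ord])
  refine ⟨fun i => (Ordinal.ToType.mk.symm (c i)).1, fun i => (Ordinal.ToType.mk.symm (c i)).2,
    fun x γ hγ => ?_⟩
  obtain ⟨i, hxi, hi⟩ := hc x (Ordinal.ToType.mk ⟨γ, hγ⟩)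
  exact ⟨i, hxi, by simp [hi]⟩

theorem stmt_1 {X ι : Type u} (μ κ : Cardinal.{u}) (hκ : ℵ₀ ≤ κ) (hX : #X ≤ μ)
    (A : ι → Set X) (hsize : ∀ i, #(A i) ≤ κ)
    (hcov : ∀ x : X, κ ≤ #{i | x ∈ A i}) :
    ∃ c : ι → Ordinal, (∀ i, c i < κ.ord) ∧
      ∀ x : X, ∀ γ < κ.ord, ∃ i, x ∈ A i ∧ c i = γ :=
  stmt_1_general κ hκ A hsize hcov
end

section
/- For each infinite cardinal μ there is a family H of μ many subsets of X = {f ∈ 2^μ : |f⁻¹(1)| = μ}, namely H_α = {x ∈ X : x(α) = 1} for α < μ, such that H is a μ-fold cover of X (every point lies in exactly μ members) but H cannot be partitioned into two subfamilies each covering X. -/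
open Cardinal

theorem stmt_2 {M : Type u} (hM : ℵ₀ ≤ #M) :
    ∃ H : M → Set (M → Bool),
      (∀ α, H α = {x | #(x ⁻¹' {true} : Set M) = #M ∧ x α = true}) ∧
      Function.Injective H ∧
      (∀ x : M → Bool, #(x ⁻¹' {true} : Set M) = #M → #{α | x ∈ H α} = #M) ∧
      ∀ I : Set M,
        ¬((∀ x : M → Bool, #(x ⁻¹' {true} : Set M) = #M → ∃ α ∈ I, x ∈ H α) ∧
          (∀ x : M → Bool, #(x ⁻¹' {true} : Set M) = #M → ∃ α ∉ I, x ∈ H α)) := by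
  classical
  have inst : Infinite M := Cardinal.infinite_iff.mpr hM
  refine ⟨fun α => {x | #(x ⁻¹' {true} : Set M) = #M ∧ x α = true},
    fun _ => rfl, ?_, ?_, ?_⟩
  · intro α β h
    by_contra hne
    set x : M → Bool := fun a => decide (a ≠ β) with hxdef
    have hx : (x ⁻¹' {true} : Set M) = {β}ᶜ := by
      ext a; simp [hxdef]
    have hcard : #(x ⁻¹' {true} : Set M) = #M := by
      rw [hx]
      refine Cardinal.mk_compl_of_infinite _ ?_
      rw [Cardinal.mk_singleton]
      exact lt_of_lt_of_le Cardinal.one_lt_aleph0 hM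
    have hmem : x ∈ {y : M → Bool | #(y ⁻¹' {true} : Set M) = #M ∧ y α = true} :=
      ⟨hcard, by simp [hxdef, hne]⟩
    have h' : {y : M → Bool | #(y ⁻¹' {true} : Set M) = #M ∧ y α = true}
        = {y : M → Bool | #(y ⁻¹' {true} : Set M) = #M ∧ y β = true} := h
    rw [h'] at hmem
    have := hmem.2
    simp [hxdef] at this
  · intro x hx
    have : {α | x ∈ {y : M → Bool | #(y ⁻¹' {true} : Set M) = #M ∧ y α = true}}
        = x ⁻¹' {true} := by
      ext α; simp [hx, Set.mem_preimage]
    rw [this, hx]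
  · rintro I ⟨h1, h2⟩
    have hsum : #(I : Set M) + #(Iᶜ : Set M) = #M := Cardinal.mk_sum_compl I
    by_cases hI : #(Iᶜ : Set M) = #M
    · set x : M → Bool := fun a => decide (a ∉ I) with hxdef
      have hx : (x ⁻¹' {true} : Set M) = Iᶜ := by ext a; simp [hxdef]
      obtain ⟨α, hαI, hmem⟩ := h1 x (by rw [hx]; exact hI)
      have := hmem.2
      simp [hxdef] at this
      exact this hαI
    · have hIeq : #(I : Set M) = #M := by
        by_contra h
        have h1' : #(I : Set M) < #M := lt_of_le_of_ne (Cardinal.mk_set_le _) h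
        have h2' : #(Iᶜ : Set M) < #M := lt_of_le_of_ne (Cardinal.mk_set_le _) hI
        exact absurd hsum (ne_of_lt (Cardinal.add_lt_of_lt hM h1' h2'))
      set y : M → Bool := fun a => decide (a ∈ I) with hydef
      have hy : (y ⁻¹' {true} : Set M) = I := by ext a; simp [hydef]
      obtain ⟨α, hαI, hmem⟩ := h2 y (by rw [hy]; exact hIeq)
      have := hmem.2
      simp [hydef] at this
      exact hαI this
end

section
/- Let X be a set and H a simple cover of X (a family of subsets whose union is X). Suppose that for every subfamily K ⊆ H there exists J ⊆ K with ∪J = ∪K such that J admits a maximally good coloring. Then H itself admits a maximally good coloring. -/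
/-!
Peel `H` off in layers by transfinite recursion: `J α` is a well-colorable subfamily of what
is left of `H` after the earlier layers, with the same union as that remainder. Recolor the
sets of color `0` in `J α` by `α` and glue the colorings. A point `x` lies in the union of
`J α` exactly for the `α` below some ordinal `δ`, so it sees every color below `δ`. The
members of `H` through `x` are spread over these `δ` layers, so for `δ ≤ γ < #H(x)` a single
layer has infinitely many and more than `γ.card` members through `x`, and its own coloring
provides the color `γ`.
-/

open Cardinal

/-- A maximally good coloring of a family `J` of subsets of `X`: the sets of
color `0` cover `⋃₀ J`, and every point of `⋃₀ J` contained in infinitely many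
members of `J` sees all ordinals below the cardinality of its set of members
as colors. -/
def MaximallyGood {X : Type u} (J : Set (Set X)) (c : Set X → Ordinal) : Prop :=
  (∀ x ∈ ⋃₀ J, ∃ A ∈ J, x ∈ A ∧ c A = 0) ∧
  ∀ x ∈ ⋃₀ J, ℵ₀ ≤ #{A | A ∈ J ∧ x ∈ A} →
    ∀ β < (#{A | A ∈ J ∧ x ∈ A}).ord, ∃ A ∈ J, x ∈ A ∧ c A = β

open Set Function

theorem exists_aleph0_le_and_lt_mk_of_subset_iUnion {α ι : Type u} {S : Set α}
    (T : ι → Set α) (hST : S ⊆ ⋃ i, T i) (hS : ℵ₀ ≤ #S) {μ : Cardinal.{u}}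
    (hι : #ι ≤ μ) (hμS : μ < #S) : ∃ i, ℵ₀ ≤ #(T i) ∧ μ < #(T i) := by
  by_contra! hsmall
  rcases lt_or_ge μ ℵ₀ with hμ | hμ
  · have : Finite ι := lt_aleph0_iff_finite.1 (hι.trans_lt hμ)
    have hT : ∀ i, (T i).Finite := fun i => by
      by_contra hTi
      have hTi : ℵ₀ ≤ #(T i) := not_lt.1 (mt lt_aleph0_iff_set_finite.1 hTi)
      exact ((hsmall i hTi).trans_lt hμ).not_ge hTi
    exact hS.not_gt (lt_aleph0_iff_set_finite.2 ((finite_iUnion hT).subset hST))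
  · have hT : ∀ i, #(T i) ≤ μ := fun i => by
      rcases lt_or_ge #(T i) ℵ₀ with h | h
      exacts [h.le.trans hμ, hsmall i h]
    refine hμS.not_ge ?_
    calc #S ≤ #(⋃ i, T i) := mk_le_mk_of_subset hST
      _ ≤ #ι * ⨆ i, #(T i) := mk_iUnion_le T
      _ ≤ μ * μ := mul_le_mul' hι (ciSup_le' hT)
      _ = μ := mul_eq_self hμ

section Glue

variable {X : Type u} {J : Ordinal.{u} → Set (Set X)}

theorem exists_notMem_sUnion_of_pairwise_disjoint (hJ : Pairwise (Disjoint on J)) (x : X) :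
    ∃ α, x ∉ ⋃₀ J α := by
  by_contra! h
  choose A hA hxA using h
  refine not_injective_of_ordinal A fun α β hAB => hJ.eq ?_
  exact not_disjoint_iff.2 ⟨A α, hA α, hAB ▸ hA β⟩

theorem exists_mem_sUnion_iff_lt (hJ : Pairwise (Disjoint on J))
    (hanti : Antitone fun α => ⋃₀ J α) (x : X) : ∃ δ, ∀ α, x ∈ ⋃₀ J α ↔ α < δ := by
  have hne : {α | x ∉ ⋃₀ J α}.Nonempty := exists_notMem_sUnion_of_pairwise_disjoint hJ x
  refine ⟨sInf {α | x ∉ ⋃₀ J α}, fun α => ⟨fun hx => ?_, fun hα => ?_⟩⟩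
  · by_contra! hle
    exact csInf_mem hne (hanti hle hx)
  · by_contra hx
    exact (csInf_le' hx).not_gt hα

open Classical in
noncomputable def gluedColoring (J : Ordinal.{u} → Set (Set X))
    (c : Ordinal.{u} → Set X → Ordinal.{u}) (A : Set X) : Ordinal.{u} :=
  if h : ∃ α, A ∈ J α then
    if c h.choose A = 0 then h.choose else c h.choose A
  else 0

theorem gluedColoring_of_mem (hJ : Pairwise (Disjoint on J))
    {c : Ordinal.{u} → Set X → Ordinal.{u}} {α : Ordinal.{u}} {A : Set X} (hA : A ∈ J α) :
    gluedColoring J c A = if c α A = 0 then α else c α A := by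
  have h : ∃ β, A ∈ J β := ⟨α, hA⟩
  have hα : h.choose = α := hJ.eq (not_disjoint_iff.2 ⟨A, h.choose_spec, hA⟩)
  rw [gluedColoring, dif_pos h, hα]

theorem maximallyGood_gluedColoring {H : Set (Set X)} {c : Ordinal.{u} → Set X → Ordinal.{u}}
    (hJH : ∀ α, J α ⊆ H) (hJ : Pairwise (Disjoint on J)) (hanti : Antitone fun α => ⋃₀ J α)
    (hcover : ∀ A ∈ H, ∀ x ∈ A, ∃ α, A ∈ J α) (hc : ∀ α, MaximallyGood (J α) (c α)) :
    MaximallyGood H (gluedColoring J c) := by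
  have hcolor_index : ∀ x α, x ∈ ⋃₀ J α → ∃ A ∈ H, x ∈ A ∧ gluedColoring J c A = α := by
    intro x α hx
    obtain ⟨A, hA, hxA, hcA⟩ := (hc α).1 x hx
    exact ⟨A, hJH α hA, hxA, by rw [gluedColoring_of_mem hJ hA, if_pos hcA]⟩
  have hmem_zero : ∀ x ∈ ⋃₀ H, x ∈ ⋃₀ J 0 := by
    rintro x ⟨A, hA, hxA⟩
    obtain ⟨α, hAα⟩ := hcover A hA x hxA
    exact hanti (zero_le (a := α)) ⟨A, hAα, hxA⟩
  refine ⟨fun x hx => hcolor_index x 0 (hmem_zero x hx), fun x hx hinf γ hγ => ?_⟩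
  obtain ⟨δ, hδ⟩ := exists_mem_sUnion_iff_lt hJ hanti x
  rcases lt_or_ge γ δ with hγδ | hδγ
  · exact hcolor_index x γ ((hδ γ).2 hγδ)
  have hγ0 : γ ≠ 0 := ((hδ 0).1 (hmem_zero x hx)).trans_le hδγ |>.ne'
  let T : δ.ToType → Set (Set X) := fun i => {A | A ∈ J (Ordinal.ToType.mk.symm i) ∧ x ∈ A}
  have hHT : {A | A ∈ H ∧ x ∈ A} ⊆ ⋃ i, T i := by
    rintro A ⟨hA, hxA⟩
    obtain ⟨α, hAα⟩ := hcover A hA x hxA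
    have hαδ : α < δ := (hδ α).1 ⟨A, hAα, hxA⟩
    exact mem_iUnion.2 ⟨Ordinal.ToType.mk ⟨α, hαδ⟩, by simpa [T] using ⟨hAα, hxA⟩⟩
  obtain ⟨i, hi_inf, hi_lt⟩ := exists_aleph0_le_and_lt_mk_of_subset_iUnion T hHT hinf
    (by rw [mk_toType]; exact Ordinal.card_le_card hδγ) (lt_ord.1 hγ)
  set α : Ordinal.{u} := (Ordinal.ToType.mk.symm i).1
  have hxα : x ∈ ⋃₀ J α := (hδ α).2 (Ordinal.ToType.mk.symm i).2
  obtain ⟨A, hA, hxA, hcA⟩ := (hc α).2 x hxα hi_inf γ (lt_ord.2 hi_lt)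
  exact ⟨A, hJH α hA, hxA, by rw [gluedColoring_of_mem hJ hA, hcA, if_neg hγ0]⟩

end Glue

section Peeling

variable {X : Type u} (H : Set (Set X)) (pick : Set (Set X) → Set (Set X))

noncomputable def remaining : Ordinal.{u} → Set (Set X) :=
  Ordinal.lt_wf.fix fun α ih => H \ ⋃ (β) (h : β < α), pick (ih β h)

theorem remaining_eq (α : Ordinal.{u}) :
    remaining H pick α = H \ ⋃ β < α, pick (remaining H pick β) :=
  Ordinal.lt_wf.fix_eq _ _

theorem remaining_subset (α : Ordinal.{u}) : remaining H pick α ⊆ H := by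
  rw [remaining_eq]
  exact sdiff_subset

theorem remaining_antitone : Antitone (remaining H pick) := by
  intro β α hβα
  rw [remaining_eq, remaining_eq]
  exact sdiff_subset_sdiff_right <|
    biUnion_mono (fun _ hγ => lt_of_lt_of_le hγ hβα) fun _ _ => le_rfl

variable {H pick}

theorem pairwise_disjoint_pick_remaining (hpick : ∀ K ⊆ H, pick K ⊆ K) :
    Pairwise (Disjoint on fun α => pick (remaining H pick α)) := by
  refine (pairwise_disjoint_on _).2 fun β α hβα => disjoint_left.2 fun A hAβ hAα => ?_
  have hA := hpick _ (remaining_subset H pick α) hAα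
  rw [remaining_eq] at hA
  exact hA.2 (mem_biUnion hβα hAβ)

theorem antitone_sUnion_pick_remaining (hunion : ∀ K ⊆ H, ⋃₀ pick K = ⋃₀ K) :
    Antitone fun α => ⋃₀ pick (remaining H pick α) := by
  intro β α hβα
  simp only [hunion _ (remaining_subset H pick _)]
  exact sUnion_mono (remaining_antitone H pick hβα)

theorem exists_mem_pick_remaining (hpick : ∀ K ⊆ H, pick K ⊆ K)
    (hunion : ∀ K ⊆ H, ⋃₀ pick K = ⋃₀ K) {A : Set X} (hA : A ∈ H) {x : X} (hxA : x ∈ A) :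
    ∃ α, A ∈ pick (remaining H pick α) := by
  by_contra! hnot
  have hAmem : ∀ α, A ∈ remaining H pick α := fun α => by
    rw [remaining_eq]
    exact ⟨hA, by simpa using fun β _ => hnot β⟩
  obtain ⟨α, hα⟩ :=
    exists_notMem_sUnion_of_pairwise_disjoint (pairwise_disjoint_pick_remaining hpick) x
  rw [hunion _ (remaining_subset H pick α)] at hα
  exact hα ⟨A, hAmem α, hxA⟩

end Peeling

theorem stmt_10_general {X : Type u} (H : Set (Set X))
    (hsub : ∀ K ⊆ H, ∃ J ⊆ K, ⋃₀ J = ⋃₀ K ∧ ∃ c, MaximallyGood J c) :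
    ∃ c, MaximallyGood H c := by
  choose! pick hpick hunion c hc using hsub
  refine ⟨gluedColoring (fun α => pick (remaining H pick α)) fun α => c (remaining H pick α),
    maximallyGood_gluedColoring (fun α => ?_) (pairwise_disjoint_pick_remaining hpick)
      (antitone_sUnion_pick_remaining hunion) (fun A hA x hxA => ?_) fun α => ?_⟩
  · exact (hpick _ (remaining_subset H pick α)).trans (remaining_subset H pick α)
  · exact exists_mem_pick_remaining hpick hunion hA hxA
  · exact hc _ (remaining_subset H pick α)

/-- If every subfamily `K` of a simple cover `H` of `X` contains a subfamily
`J` with the same union admitting a maximally good coloring, then `H` itself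
admits a maximally good coloring. -/
theorem stmt_10 {X : Type u} (H : Set (Set X)) (hcov : ⋃₀ H = Set.univ)
    (hsub : ∀ K ⊆ H, ∃ J ⊆ K, ⋃₀ J = ⋃₀ K ∧ ∃ c, MaximallyGood J c) :
    ∃ c, MaximallyGood H c :=
  stmt_10_general H hsub
end

section
/- There exists a sequence (k_i)_{i<ω} of positive integers such that the set F = { Σ_{i<ω} σ(i)/4^{k_i} : σ ∈ 4^ω }, a perfect subset W ⊆ [0,1], and a sequence (v_n)_{n<ω} ⊆ [0,1] converging to 0 satisfy: W ∪ {v_n : n < ω} is linearly independent over ℚ, and the ℚ-linear span of F intersects the ℚ-linear span of W ∪ {v_n : n < ω} only in {0}. -/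
/-!
Every number involved is a sparse binary expansion `∑ d p / 2 ^ E p` with integer digits and
`E p = 2 (p + 1) ^ 2`, whose gaps `E (p + 1) - E p` tend to infinity. A vanishing expansion with
bounded digits then has eventually vanishing digits: once the gap after `q` is large, the partial
sum up to `q` is a multiple of `2 ^ (-E q)` but smaller than it in absolute value.

The places are split by their residue mod 3. The point of `W` indexed by `σ ∈ 2^ω` has digit 1
at a place coding each finite prefix of `σ`, `v n` has digit 1 at the places coding the pairs
`(n, m)`, and the point of `F` indexed by `τ ∈ 4^ω` has digit `τ i` at place `3 i + 2`, so that
`4 ^ k i = 2 ^ E (3 i + 2)` for `k i = (3 i + 3) ^ 2`. Each point of `W ∪ {v n}` owns infinitely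
many places where any finitely many other points all have digit 0, so it has coefficient 0 in every
integral (hence every rational) relation among points of `W ∪ {v n} ∪ F`. This gives both the
independence and the trivial intersection of the spans. Finally `W` is the injective continuous
image of Cantor space, hence perfect.
-/

open Filter Function Set Topology

section SparseExpansion

variable {E : ℕ → ℕ} {d : ℕ → ℤ} {M : ℤ}

noncomputable def sparseVal (E : ℕ → ℕ) (d : ℕ → ℤ) : ℝ := ∑' p, (d p : ℝ) / 2 ^ E p

lemma norm_sparse_term_le (hE : StrictMono E) (hd : ∀ p, |d p| ≤ M) (q i : ℕ) :
    ‖(d (i + q) : ℝ) / 2 ^ E (i + q)‖ ≤ M / 2 ^ E q * (1 / 2) ^ i := by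
  have hpow : (2 : ℝ) ^ (i + E q) ≤ 2 ^ E (i + q) :=
    pow_le_pow_right₀ one_le_two (hE.add_le_nat i q)
  have hM : (0 : ℝ) ≤ M := by exact_mod_cast (abs_nonneg _).trans (hd 0)
  rw [norm_div, norm_pow, Real.norm_two, div_le_iff₀ (by positivity)]
  calc ‖(d (i + q) : ℝ)‖ ≤ M := by rw [Real.norm_eq_abs]; exact_mod_cast hd (i + q)
    _ = M / 2 ^ E q * (1 / 2) ^ i * 2 ^ (i + E q) := by rw [one_div_pow, pow_add]; field_simp
    _ ≤ M / 2 ^ E q * (1 / 2) ^ i * 2 ^ E (i + q) := by gcongr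

lemma summable_sparse (hE : StrictMono E) (hd : ∀ p, |d p| ≤ M) :
    Summable fun p ↦ (d p : ℝ) / 2 ^ E p := by
  simpa using Summable.of_norm_bounded (summable_geometric_two.mul_left _)
    (norm_sparse_term_le hE hd 0)

lemma abs_sparse_tail_le (hE : StrictMono E) (hd : ∀ p, |d p| ≤ M) (q : ℕ) :
    |∑' i, (d (i + q) : ℝ) / 2 ^ E (i + q)| ≤ 2 * M / 2 ^ E q := by
  have hgeom : HasSum (fun i : ℕ ↦ M / 2 ^ E q * (1 / 2 : ℝ) ^ i) (M / 2 ^ E q * 2) :=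
    hasSum_geometric_two.mul_left _
  rw [← Real.norm_eq_abs]
  exact (tsum_of_norm_bounded hgeom (norm_sparse_term_le hE hd q)).trans_eq (by ring)

/-- The digits up to `q` make the partial sum a multiple of `2 ^ (-E q)`, while the tail is
smaller than that when the gap after `q` is large. -/
lemma sum_range_sparse_eq_zero (hE : StrictMono E) (hd : ∀ p, |d p| ≤ M)
    (h0 : sparseVal E d = 0) {q : ℕ} (hgap : 2 * M < 2 ^ (E (q + 1) - E q)) :
    ∑ p ∈ Finset.range (q + 1), (d p : ℝ) / 2 ^ E p = 0 := by
  set H := ∑ p ∈ Finset.range (q + 1), (d p : ℝ) / 2 ^ E p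
  have hH : |H| ≤ 2 * M / 2 ^ E (q + 1) := by
    have := (summable_sparse hE hd).sum_add_tsum_nat_add (q + 1)
    rw [sparseVal] at h0
    rw [h0, add_eq_zero_iff_eq_neg] at this
    change H = _ at this
    rw [this, abs_neg]
    exact abs_sparse_tail_le hE hd (q + 1)
  set z : ℤ := ∑ p ∈ Finset.range (q + 1), d p * 2 ^ (E q - E p)
  have hz : H = z / 2 ^ E q := by
    simp only [H, z, Int.cast_sum, Int.cast_mul, Int.cast_pow, Int.cast_ofNat, Finset.sum_div]
    refine Finset.sum_congr rfl fun p hp ↦ ?_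
    have hpq : E p ≤ E q := hE.monotone (Nat.lt_succ_iff.1 (Finset.mem_range.1 hp))
    rw [pow_sub₀ _ two_ne_zero hpq]
    field_simp
  have hgap' : (2 * M : ℝ) < 2 ^ (E (q + 1) - E q) := by exact_mod_cast hgap
  have hsplit : (2 : ℝ) ^ E (q + 1) = 2 ^ (E (q + 1) - E q) * 2 ^ E q := by
    rw [← pow_add, Nat.sub_add_cancel (hE.monotone q.le_succ)]
  have hz1 : |(z : ℝ)| < 1 := by
    rw [hz, abs_div, abs_of_pos (by positivity : (0 : ℝ) < 2 ^ E q), hsplit,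
      div_le_iff₀ (by positivity)] at hH
    calc |(z : ℝ)| ≤ 2 * M / (2 ^ (E (q + 1) - E q) * 2 ^ E q) * 2 ^ E q := hH
      _ = 2 * M / 2 ^ (E (q + 1) - E q) := by field_simp
      _ < 1 := (div_lt_one (by positivity)).2 hgap'
  have : z = 0 := by
    rw [← Int.cast_abs] at hz1
    exact Int.abs_lt_one_iff.1 (by exact_mod_cast hz1)
  rw [hz, this, Int.cast_zero, zero_div]

theorem eventually_eq_zero_of_sparseVal_eq_zero (hE : StrictMono E)
    (hgap : Tendsto (fun q ↦ E (q + 1) - E q) atTop atTop) (hd : ∀ p, |d p| ≤ M)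
    (h0 : sparseVal E d = 0) : ∀ᶠ p in atTop, d p = 0 := by
  have hbig : ∀ᶠ q in atTop, 2 * M < 2 ^ (E (q + 1) - E q) :=
    ((tendsto_pow_atTop_atTop_of_one_lt one_lt_two).comp hgap).eventually_gt_atTop _
  obtain ⟨Q, hQ⟩ := eventually_atTop.1 hbig
  refine eventually_atTop.2 ⟨Q + 1, fun p hp ↦ ?_⟩
  have hnext := sum_range_sparse_eq_zero hE hd h0 (hQ p (by omega))
  have hprev := sum_range_sparse_eq_zero hE hd h0 (hQ (p - 1) (by omega))
  rw [Nat.sub_add_cancel (by omega)] at hprev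
  rw [Finset.sum_range_succ, hprev, zero_add, div_eq_zero_iff] at hnext
  exact_mod_cast hnext.resolve_right (by positivity)

lemma sparseVal_sum {ι : Type*} (hE : StrictMono E) {d : ι → ℕ → ℤ} {B : ℤ}
    (hB : ∀ j p, |d j p| ≤ B) (t : Finset ι) (c : ι → ℤ) :
    sparseVal E (fun p ↦ ∑ j ∈ t, c j * d j p) = ∑ j ∈ t, c j * sparseVal E (d j) := by
  simp only [sparseVal, ← tsum_mul_left]
  rw [← Summable.tsum_finsetSum fun j _ ↦ (summable_sparse hE (hB j)).mul_left _]
  refine tsum_congr fun p ↦ ?_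
  push_cast
  rw [Finset.sum_div]
  exact Finset.sum_congr rfl fun j _ ↦ mul_div_assoc _ _ _

lemma sparseVal_mem_Icc (hE : ∀ p, p + 1 ≤ E p) (hd : ∀ p, d p ∈ Icc (0 : ℤ) 1) :
    sparseVal E d ∈ Icc (0 : ℝ) 1 := by
  have hle : ∀ p, (d p : ℝ) / 2 ^ E p ≤ 1 / 2 / 2 ^ p := fun p ↦ by
    rw [div_div, ← pow_succ']
    exact div_le_div₀ zero_le_one (by exact_mod_cast (hd p).2) (by positivity)
      (pow_le_pow_right₀ one_le_two (hE p))
  have hnonneg : ∀ p, 0 ≤ (d p : ℝ) / 2 ^ E p := fun p ↦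
    div_nonneg (by exact_mod_cast (hd p).1) (by positivity)
  refine ⟨tsum_nonneg hnonneg, (tsum_geometric_two' 1).symm ▸ ?_⟩
  have hgeom : Summable fun p : ℕ ↦ (1 : ℝ) / 2 / 2 ^ p :=
    (summable_geometric_two.mul_left (1 / 2)).congr fun p ↦ by
      rw [one_div_pow, one_div_mul_one_div, div_div]
  exact Summable.tsum_le_tsum hle (hgeom.of_nonneg_of_le hnonneg hle) hgeom

lemma abs_sparseVal_le_of_forall_lt_eq_zero (hE : StrictMono E)
    (hd : ∀ p, |d p| ≤ M) {q : ℕ} (hq : ∀ p < q, d p = 0) :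
    |sparseVal E d| ≤ 2 * M / 2 ^ E q := by
  rw [sparseVal, ← (summable_sparse hE hd).sum_add_tsum_nat_add q,
    Finset.sum_eq_zero fun p hp ↦ by rw [hq p (Finset.mem_range.1 hp), Int.cast_zero, zero_div],
    zero_add]
  exact abs_sparse_tail_le hE hd q

end SparseExpansion

section PrivatePositions

variable {ι : Type*}

def HasPrivatePositions (d : ι → ℕ → ℤ) (i : ι) : Prop :=
  ∃ pos : ℕ → ℕ, Tendsto pos atTop atTop ∧ (∀ n, d i (pos n) ≠ 0) ∧
    ∀ j ≠ i, ∀ᶠ n in atTop, d j (pos n) = 0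

theorem HasPrivatePositions.coeff_eq_zero {E : ℕ → ℕ} (hE : StrictMono E)
    (hgap : Tendsto (fun q ↦ E (q + 1) - E q) atTop atTop) {d : ι → ℕ → ℤ} {B : ℤ}
    (hB : ∀ j p, |d j p| ≤ B) {i : ι} (hi : HasPrivatePositions d i) {l : ι →₀ ℤ}
    (hl : Finsupp.linearCombination ℤ (fun j ↦ sparseVal E (d j)) l = 0) : l i = 0 := by
  classical
  obtain ⟨pos, hpos, hne, hzero⟩ := hi
  set D : ℕ → ℤ := fun p ↦ ∑ j ∈ l.support, l j * d j p
  have hD : ∀ p, |D p| ≤ ∑ j ∈ l.support, |l j| * B := fun p ↦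
    (Finset.abs_sum_le_sum_abs _ _).trans <| Finset.sum_le_sum fun j _ ↦ by
      rw [abs_mul]; exact mul_le_mul_of_nonneg_left (hB j p) (abs_nonneg _)
  have hD0 : sparseVal E D = 0 := by
    rw [sparseVal_sum hE hB, ← hl, Finsupp.linearCombination_apply, Finsupp.sum]
    simp only [zsmul_eq_mul]
  obtain ⟨n, hDn, hothers⟩ := ((hpos.eventually
    (eventually_eq_zero_of_sparseVal_eq_zero hE hgap hD hD0)).and
    ((Finset.eventually_all _).2 fun j hj ↦ hzero j (Finset.ne_of_mem_erase hj))).exists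
  have hDi : D (pos n) = l i * d i (pos n) :=
    Finset.sum_eq_single i (fun j hj hji ↦ by rw [hothers j (Finset.mem_erase.2 ⟨hji, hj⟩),
      mul_zero]) (fun hi ↦ by rw [Finsupp.notMem_support_iff.1 hi, zero_mul])
  rw [hDi] at hDn
  exact (mul_eq_zero.1 hDn).resolve_right (hne n)

end PrivatePositions

section Relations

variable {ι M : Type*} [AddCommGroup M] [Module ℚ M] {x : ι → M} {i : ι}

lemma coeff_eq_zero_of_linearCombination_rat
    (h : ∀ l : ι →₀ ℤ, Finsupp.linearCombination ℤ x l = 0 → l i = 0) {l : ι →₀ ℚ}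
    (hl : Finsupp.linearCombination ℚ x l = 0) : l i = 0 := by
  obtain ⟨⟨b, hb⟩, hint⟩ :=
    IsLocalization.exist_integer_multiples (nonZeroDivisors ℤ) l.support l
  have hcast : ∀ j ∈ l.support, (((b * l j).num : ℤ) : ℚ) = b * l j := fun j hj ↦ by
    obtain ⟨z, hz⟩ := hint j hj
    simp only [zsmul_eq_mul, algebraMap_int_eq, eq_intCast] at hz
    rw [← hz, Rat.num_intCast]
  have hm := h (l.mapRange (fun q ↦ ((b : ℚ) * q).num) (by rw [mul_zero, Rat.num_zero])) <| by
    rw [Finsupp.linearCombination_apply,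
      Finsupp.sum_mapRange_index (h := fun j (c : ℤ) ↦ c • x j) fun _ ↦ zero_smul ℤ _]
    calc ∑ j ∈ l.support, ((b : ℚ) * l j).num • x j = ∑ j ∈ l.support, (b : ℚ) • (l j • x j) :=
          Finset.sum_congr rfl fun j hj ↦ by
            rw [← Int.cast_smul_eq_zsmul ℚ, hcast j hj, mul_smul]
      _ = (b : ℚ) • Finsupp.linearCombination ℚ x l := by
          rw [← Finset.smul_sum, Finsupp.linearCombination_apply, Finsupp.sum]
      _ = 0 := by rw [hl, smul_zero]
  rw [Finsupp.mapRange_apply, Rat.num_eq_zero, mul_eq_zero] at hm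
  exact hm.resolve_left (by exact_mod_cast nonZeroDivisors.ne_zero hb)

end Relations

section SumFamily

variable {K M α β : Type*} [Ring K] [AddCommGroup M] [Module K M] {x : α ⊕ β → M}

theorem linearIndependent_comp_inl
    (h : ∀ l : α ⊕ β →₀ K, Finsupp.linearCombination K x l = 0 → ∀ a, l (.inl a) = 0) :
    LinearIndependent K (x ∘ .inl) := by
  rw [linearIndependent_iff]
  intro l hl
  ext a
  have := h (l.mapDomain .inl) (by rwa [Finsupp.linearCombination_mapDomain]) a
  rwa [Finsupp.mapDomain_apply Sum.inl_injective] at this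

theorem disjoint_span_range_comp_inl_inr
    (h : ∀ l : α ⊕ β →₀ K, Finsupp.linearCombination K x l = 0 → ∀ a, l (.inl a) = 0) :
    Disjoint (Submodule.span K (range (x ∘ .inl))) (Submodule.span K (range (x ∘ .inr))) := by
  rw [Submodule.disjoint_def]
  intro v hvl hvr
  rw [← Finsupp.range_linearCombination] at hvl hvr
  obtain ⟨la, rfl⟩ := hvl
  obtain ⟨lb, hlb⟩ := hvr
  have hla : la = 0 := by
    ext a
    have := h (la.mapDomain .inl - lb.mapDomain .inr) (by
      rw [map_sub, Finsupp.linearCombination_mapDomain, Finsupp.linearCombination_mapDomain,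
        hlb, sub_self]) a
    rwa [Finsupp.sub_apply, Finsupp.mapDomain_apply Sum.inl_injective,
      Finsupp.mapDomain_of_notMem_range _ _ (by simp), sub_zero] at this
  rw [hla, map_zero]

end SumFamily

instance perfectSpace_nat_pi {α : Type*} [TopologicalSpace α] [Nontrivial α] :
    PerfectSpace (ℕ → α) := by
  rw [perfectSpace_iff_forall_not_isolated]
  intro σ
  choose b hb using fun k ↦ exists_ne (σ k)
  have : Tendsto (fun k ↦ update σ k (b k)) atTop (𝓝[≠] σ) := by
    refine tendsto_nhdsWithin_iff.2 ⟨tendsto_pi_nhds.2 fun i ↦ ?_, .of_forall fun k h ↦ ?_⟩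
    · exact tendsto_const_nhds.congr' <|
        (eventually_gt_atTop i).mono fun k hk ↦ (update_of_ne hk.ne _ _).symm
    · exact hb k (by simpa using congrFun h k)
  exact this.neBot

theorem perfect_range_of_continuous_injective {X Y : Type*} [TopologicalSpace X]
    [CompactSpace X] [PerfectSpace X] [TopologicalSpace Y] [T2Space Y] {f : X → Y}
    (hf : Continuous f) (hinj : Injective f) : Perfect (range f) := by
  refine ⟨(isCompact_range hf).isClosed, ?_⟩
  rintro _ ⟨x, rfl⟩
  have : Tendsto f (𝓝[≠] x) (𝓝[≠] (f x) ⊓ 𝓟 (range f)) :=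
    tendsto_inf.2 ⟨hf.continuousWithinAt.tendsto_nhdsWithin fun _ hy ↦ hinj.ne hy,
      tendsto_principal.2 (.of_forall mem_range_self)⟩
  exact this.neBot

section Extend

variable {α : Type*} {E : ℕ → ℕ} {g : α → ℕ}

lemma sparseVal_extend (hg : Injective g) (c : α → ℤ) :
    sparseVal E (extend g c 0) = ∑' a, (c a : ℝ) / 2 ^ E (g a) := by
  rw [sparseVal, ← hg.tsum_eq]
  · simp only [hg.extend_apply]
  · intro p hp
    by_contra hpg
    exact hp (by simp only [extend_apply' _ _ _ hpg, Pi.zero_apply, Int.cast_zero, zero_div])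

lemma abs_extend_le {c : α → ℤ} {B : ℤ} (hc : ∀ a, |c a| ≤ B) (hB : 0 ≤ B) (p : ℕ) :
    |extend g c 0 p| ≤ B := by
  classical
  rw [extend_def]
  split_ifs
  exacts [hc _, by simpa using hB]

lemma extend_one_mem_Icc (p : ℕ) : extend g 1 0 p ∈ Icc (0 : ℤ) 1 := by
  classical
  rw [extend_def]
  split_ifs <;> simp

end Extend

namespace Construction

def placeExp (p : ℕ) : ℕ := 2 * (p + 1) ^ 2

lemma placeExp_strictMono : StrictMono placeExp := fun a b h ↦ by
  unfold placeExp; gcongr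

lemma succ_le_placeExp (p : ℕ) : p + 1 ≤ placeExp p := by
  unfold placeExp; nlinarith

lemma tendsto_placeExp_gap : Tendsto (fun q ↦ placeExp (q + 1) - placeExp q) atTop atTop :=
  tendsto_atTop_mono (fun q ↦ show q ≤ _ by
    have : placeExp (q + 1) = placeExp q + (4 * q + 6) := by unfold placeExp; ring
    omega) tendsto_id

def prefixList (σ : ℕ → Bool) (n : ℕ) : List Bool := List.ofFn fun i : Fin n ↦ σ i

lemma eventually_prefixList_ne {σ σ' : ℕ → Bool} (h : σ ≠ σ') :
    ∀ᶠ n in atTop, prefixList σ n ≠ prefixList σ' n := by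
  obtain ⟨i, hi⟩ := Function.ne_iff.1 h
  filter_upwards [eventually_gt_atTop i] with n hn heq
  exact hi (congrFun (List.ofFn_inj.1 heq) ⟨i, hn⟩)

def cantorPos (σ : ℕ → Bool) (n : ℕ) : ℕ := 3 * Nat.pair n (Encodable.encode (prefixList σ n))

def nullPos (n m : ℕ) : ℕ := 3 * Nat.pair n m + 1

def fourPos (i : ℕ) : ℕ := 3 * i + 2

lemma le_cantorPos (σ : ℕ → Bool) (n : ℕ) : n ≤ cantorPos σ n := by
  have := Nat.left_le_pair n (Encodable.encode (prefixList σ n))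
  unfold cantorPos; omega

lemma le_nullPos (n m : ℕ) : m ≤ nullPos n m := by
  have := Nat.right_le_pair n m
  unfold nullPos; omega

lemma cantorPos_eq_cantorPos {σ σ' : ℕ → Bool} {m n : ℕ} (h : cantorPos σ' m = cantorPos σ n) :
    m = n ∧ prefixList σ' m = prefixList σ n := by
  unfold cantorPos at h
  have : Nat.pair m (Encodable.encode (prefixList σ' m)) =
      Nat.pair n (Encodable.encode (prefixList σ n)) := by omega
  obtain ⟨rfl, henc⟩ := Nat.pair_eq_pair.1 this
  exact ⟨rfl, Encodable.encode_injective henc⟩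

lemma cantorPos_injective (σ : ℕ → Bool) : Injective (cantorPos σ) :=
  fun _ _ h ↦ (cantorPos_eq_cantorPos h).1

lemma nullPos_eq_nullPos {n n' m m' : ℕ} (h : nullPos n' m' = nullPos n m) : n' = n ∧ m' = m :=
  Nat.pair_eq_pair.1 (by unfold nullPos at h; omega)

lemma nullPos_injective (n : ℕ) : Injective (nullPos n) :=
  fun _ _ h ↦ (nullPos_eq_nullPos h).2

lemma fourPos_injective : Injective fourPos := fun a b h ↦ by unfold fourPos at h; omega

noncomputable def digits : ((ℕ → Bool) ⊕ ℕ) ⊕ (ℕ → Fin 4) → ℕ → ℤ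
  | .inl (.inl σ) => extend (cantorPos σ) 1 0
  | .inl (.inr n) => extend (nullPos n) 1 0
  | .inr τ => extend fourPos (fun i ↦ (τ i : ℤ)) 0

lemma abs_digits_le (j : ((ℕ → Bool) ⊕ ℕ) ⊕ (ℕ → Fin 4)) (p : ℕ) : |digits j p| ≤ 3 := by
  rcases j with (σ | n) | τ <;> simp only [digits]
  · exact abs_extend_le (fun _ ↦ by norm_num) (by norm_num) p
  · exact abs_extend_le (fun _ ↦ by norm_num) (by norm_num) p
  · refine abs_extend_le (B := 3) (fun i ↦ ?_) (by norm_num) p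
    have := (τ i).isLt
    rw [abs_of_nonneg (by positivity)]
    omega

lemma hasPrivatePositions_digits_inl (a : (ℕ → Bool) ⊕ ℕ) :
    HasPrivatePositions digits (.inl a) := by
  rcases a with σ | n
  · refine ⟨cantorPos σ, tendsto_atTop_mono (le_cantorPos σ) tendsto_id,
      fun n ↦ by simp [digits, (cantorPos_injective σ).extend_apply], ?_⟩
    rintro ((σ' | n') | τ) hne <;> simp only [digits]
    · have hσ : σ ≠ σ' := fun h ↦ hne (h ▸ rfl)
      filter_upwards [eventually_prefixList_ne hσ] with n hn
      refine extend_apply' _ _ _ fun ⟨m, hm⟩ ↦ hn ?_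
      obtain ⟨rfl, h⟩ := cantorPos_eq_cantorPos hm
      exact h.symm
    · exact .of_forall fun n ↦ extend_apply' _ _ _ fun ⟨m, hm⟩ ↦ by
        unfold nullPos cantorPos at hm; omega
    · exact .of_forall fun n ↦ extend_apply' _ _ _ fun ⟨m, hm⟩ ↦ by
        unfold fourPos cantorPos at hm; omega
  · refine ⟨nullPos n, tendsto_atTop_mono (le_nullPos n) tendsto_id,
      fun m ↦ by simp [digits, (nullPos_injective n).extend_apply], ?_⟩
    rintro ((σ | n') | τ) hne <;> simp only [digits]
    · exact .of_forall fun m ↦ extend_apply' _ _ _ fun ⟨m', hm⟩ ↦ by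
        unfold nullPos cantorPos at hm; omega
    · exact .of_forall fun m ↦ extend_apply' _ _ _ fun ⟨m', hm⟩ ↦
        hne (by rw [(nullPos_eq_nullPos hm).1])
    · exact .of_forall fun m ↦ extend_apply' _ _ _ fun ⟨m', hm⟩ ↦ by
        unfold fourPos nullPos at hm; omega

noncomputable def point (j : ((ℕ → Bool) ⊕ ℕ) ⊕ (ℕ → Fin 4)) : ℝ := sparseVal placeExp (digits j)

lemma point_mem_Icc (a : (ℕ → Bool) ⊕ ℕ) : point (.inl a) ∈ Icc (0 : ℝ) 1 := by
  refine sparseVal_mem_Icc succ_le_placeExp fun p ↦ ?_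
  rcases a with σ | n <;> exact extend_one_mem_Icc p

lemma tendsto_point_nullPos : Tendsto (fun n ↦ point (.inl (.inr n))) atTop (𝓝 0) := by
  have hbound : ∀ n, ‖point (.inl (.inr n))‖ ≤ 6 * (1 / 2) ^ placeExp n := fun n ↦
    (abs_sparseVal_le_of_forall_lt_eq_zero placeExp_strictMono (abs_digits_le (.inl (.inr n)))
      (q := n) fun p hp ↦ show extend (nullPos n) 1 0 p = 0 from
        extend_apply' _ _ _ fun ⟨m, hm⟩ ↦ by
          have := Nat.left_le_pair n m
          unfold nullPos at hm; omega).trans_eq (by rw [one_div_pow]; push_cast; ring)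
  refine squeeze_zero_norm hbound ?_
  simpa using ((tendsto_pow_atTop_nhds_zero_of_lt_one (by norm_num)
    (by norm_num : (1 / 2 : ℝ) < 1)).comp placeExp_strictMono.tendsto_atTop).const_mul 6

lemma point_cantor_eq (σ : ℕ → Bool) :
    point (.inl (.inl σ)) = ∑' n, 1 / 2 ^ placeExp (cantorPos σ n) := by
  simp [point, digits, sparseVal_extend (cantorPos_injective σ)]

lemma continuous_point_cantor : Continuous fun σ ↦ point (.inl (.inl σ)) := by
  simp only [point_cantor_eq]
  refine continuous_tsum (fun n ↦ ?_) summable_geometric_two fun n σ ↦ ?_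
  · have : (fun σ : ℕ → Bool ↦ (1 : ℝ) / 2 ^ placeExp (cantorPos σ n)) =
        (fun l : Fin n → Bool ↦ (1 : ℝ) / 2 ^ placeExp (3 * Nat.pair n (Encodable.encode
          (List.ofFn l)))) ∘ fun σ i ↦ σ i := rfl
    rw [this]
    exact continuous_of_discreteTopology.comp (continuous_pi fun i ↦ continuous_apply _)
  · rw [norm_div, norm_one, norm_pow, Real.norm_two, one_div_pow]
    exact one_div_le_one_div_of_le (by positivity) <| pow_le_pow_right₀ one_le_two <|
      (le_cantorPos σ n).trans (Nat.le_succ _ |>.trans (succ_le_placeExp _))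

lemma point_four_eq (τ : ℕ → Fin 4) :
    point (.inr τ) = ∑' i, (τ i : ℝ) / 4 ^ (3 * i + 3) ^ 2 := by
  simp only [point, digits, sparseVal_extend fourPos_injective]
  refine tsum_congr fun i ↦ ?_
  rw [Int.cast_natCast, show (4 : ℝ) = 2 ^ 2 by norm_num, ← pow_mul]
  unfold placeExp fourPos
  ring_nf

end Construction

open Construction

/-- There are a sequence `(k i)` of positive integers, a perfect set
`W ⊆ [0,1]` and a sequence `(v n) ⊆ [0,1]` tending to `0` such that
`W ∪ {v n : n < ω}` is linearly independent over `ℚ` and the `ℚ`-linear span of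
`F = { Σ_i σ(i)/4^(k i) : σ ∈ 4^ω }` meets the `ℚ`-linear span of
`W ∪ {v n : n < ω}` only in `0`. -/
theorem stmt_12 :
    ∃ (k : ℕ → ℕ) (W : Set ℝ) (v : ℕ → ℝ),
      (∀ i, 0 < k i) ∧
      Perfect W ∧ W.Nonempty ∧ W ⊆ Set.Icc (0 : ℝ) 1 ∧
      (∀ n, v n ∈ Set.Icc (0 : ℝ) 1) ∧
      Filter.Tendsto v Filter.atTop (nhds 0) ∧
      LinearIndependent ℚ ((↑) : (W ∪ Set.range v : Set ℝ) → ℝ) ∧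
      Submodule.span ℚ {x : ℝ | ∃ σ : ℕ → Fin 4, x = ∑' i, (σ i : ℝ) / 4 ^ k i} ⊓
        Submodule.span ℚ (W ∪ Set.range v) = ⊥ := by
  have hrel : ∀ l, Finsupp.linearCombination ℚ point l = 0 → ∀ a, l (.inl a) = 0 :=
    fun l hl a ↦ coeff_eq_zero_of_linearCombination_rat (fun l' hl' ↦
      (hasPrivatePositions_digits_inl a).coeff_eq_zero placeExp_strictMono tendsto_placeExp_gap
        abs_digits_le hl') hl
  have hWv : range (fun σ ↦ point (.inl (.inl σ))) ∪ range (fun n ↦ point (.inl (.inr n))) =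
      range (point ∘ .inl) := by
    rw [← Sum.elim_range]
    exact congrArg range (Sum.elim_comp_inl_inr (point ∘ .inl))
  have hF : {x : ℝ | ∃ τ : ℕ → Fin 4, x = ∑' i, (τ i : ℝ) / 4 ^ (3 * i + 3) ^ 2} =
      range (point ∘ .inr) := by
    ext x
    simp only [mem_ofPred_eq, mem_range, comp_apply, point_four_eq, eq_comm]
  have hind := linearIndependent_comp_inl hrel
  refine ⟨fun i ↦ (3 * i + 3) ^ 2, _, _, fun i ↦ by positivity,
    perfect_range_of_continuous_injective continuous_point_cantor
      (hind.injective.comp Sum.inl_injective), range_nonempty _,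
    range_subset_iff.2 fun σ ↦ point_mem_Icc _, fun n ↦ point_mem_Icc _, tendsto_point_nullPos,
    ?_, ?_⟩
  · rw [hWv]
    exact hind.linearIndepOn_id
  · rw [hWv, hF]
    exact disjoint_iff.1 (disjoint_span_range_comp_inl_inr hrel).symm
end

section
/- There exists an ω-fold cover of ℝ by pairwise distinct closed sets, in fact translates of a single compact set, which cannot be decomposed into two disjoint subfamilies each covering ℝ. -/
noncomputable section

namespace Stmt15

open Classical

/-- weights `w n = 4⁻¹ ^ (n+1)` -/
def w (n : ℕ) : ℝ := (4:ℝ)⁻¹ ^ (n + 1)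

lemma w_pos (n : ℕ) : 0 < w n := by
  apply pow_pos
  norm_num

lemma w_nonneg (n : ℕ) : 0 ≤ w n := (w_pos n).le

lemma w_anti {m n : ℕ} (h : m < n) : w n < w m := by
  apply pow_lt_pow_right_of_lt_one₀ (by norm_num) (by norm_num)
  omega

lemma w_inj : Function.Injective w := by
  intro a b hab
  rcases lt_trichotomy a b with h | h | h
  · exact absurd hab.symm (ne_of_lt (w_anti h))
  · exact h
  · exact absurd hab (ne_of_lt (w_anti h))

lemma summable_w : Summable w := by
  have h : Summable (fun n : ℕ => (4:ℝ)⁻¹ ^ n) :=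
    summable_geometric_of_lt_one (by norm_num) (by norm_num)
  have h2 := h.mul_right (4:ℝ)⁻¹
  apply h2.congr
  intro n
  rw [w, pow_succ]

lemma tsum_w_tail (m : ℕ) : ∑' i : ℕ, w (i + m) = ((4:ℝ)⁻¹ ^ m) / 3 := by
  have h : ∀ i : ℕ, w (i + m) = (4:ℝ)⁻¹ ^ (m+1) * ((4:ℝ)⁻¹) ^ i := by
    intro i
    rw [w]
    rw [show i + m + 1 = (m + 1) + i by omega, pow_add]
  rw [tsum_congr h, tsum_mul_left, tsum_geometric_of_lt_one (by norm_num) (by norm_num),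
    pow_succ]
  norm_num
  ring

/-- the digit term -/
def term (b : ℕ → Bool) (n : ℕ) : ℝ := ((b n).toNat : ℝ) * w n

lemma toNat_le_one (v : Bool) : v.toNat ≤ 1 := by cases v <;> simp

lemma term_nonneg (b : ℕ → Bool) (n : ℕ) : 0 ≤ term b n := by
  apply mul_nonneg _ (w_nonneg n)
  positivity

lemma term_le (b : ℕ → Bool) (n : ℕ) : term b n ≤ w n := by
  rw [term]
  calc ((b n).toNat : ℝ) * w n ≤ 1 * w n := by
        apply mul_le_mul_of_nonneg_right _ (w_nonneg n)
        exact_mod_cast toNat_le_one (b n)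
    _ = w n := one_mul _

lemma summable_term (b : ℕ → Bool) : Summable (term b) :=
  Summable.of_nonneg_of_le (term_nonneg b) (term_le b) summable_w

/-- the value of a 0/1-digit base-4 expansion -/
def φ (b : ℕ → Bool) : ℝ := ∑' n, term b n

lemma hasSum_φ (b : ℕ → Bool) : HasSum (term b) (φ b) := (summable_term b).hasSum

lemma φ_nonneg (b : ℕ → Bool) : 0 ≤ φ b := tsum_nonneg (term_nonneg b)

lemma φ_bot : φ (fun _ => false) = 0 := by simp [φ, term]

lemma φ_single (n : ℕ) : φ (fun i => decide (i = n)) = w n := by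
  rw [φ, tsum_eq_single n]
  · simp [term]
  · intro i hi
    simp [term, hi]
set_option maxHeartbeats 2000000 in
/-- Uniqueness of small-digit expansions: if integer digits `d n ∈ [-3,2]`
with only finitely many `-3`s sum (weighted) to `0`, all digits vanish. -/
lemma digit_zero (d : ℕ → ℤ) (hlb : ∀ n, -3 ≤ d n) (hub : ∀ n, d n ≤ 2)
    (hfin : {n | d n = -3}.Finite)
    (h0 : ∑' n, (d n : ℝ) * w n = 0)
    (hs : Summable fun n => (d n : ℝ) * w n) : ∀ n, d n = 0 := by
  by_contra hc
  push_neg at hc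
  obtain ⟨nn, hnn⟩ := hc
  have hex : ∃ n, d n ≠ 0 := ⟨nn, hnn⟩
  let n₀ := Nat.find hex
  have hn₀ : d n₀ ≠ 0 := Nat.find_spec hex
  have hmin : ∀ m, m < n₀ → d m = 0 := by
    intro m hm
    have := Nat.find_min hex hm
    simpa using this
  obtain ⟨M, hM⟩ := (hfin.union (Set.finite_Iic n₀)).bddAbove
  set n₁ := M + 1 with hn₁def
  have hn₀M : n₀ ≤ M := hM (Or.inr (Set.mem_Iic.mpr le_rfl))
  have hn₁gt : n₀ < n₁ := by omega
  have hn₁ : d n₁ ≠ -3 := by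
    intro h
    have := hM (Or.inl h)
    omega
  set j₁ := n₁ - (n₀ + 1) with hj₁def
  have hj₁ : j₁ + (n₀ + 1) = n₁ := by omega
  -- split the sum
  have hsplit := Summable.sum_add_tsum_nat_add (f := fun n => (d n : ℝ) * w n) (n₀ + 1) hs
  have hrange : ∑ i ∈ Finset.range (n₀ + 1), (d i : ℝ) * w i = (d n₀ : ℝ) * w n₀ := by
    apply Finset.sum_eq_single_of_mem n₀ (by simp)
    intro i hi hne
    have hilt : i < n₀ := by
      simp only [Finset.mem_range] at hi
      omega
    rw [hmin i hilt]
    simp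
  have htsum : Summable (fun i => (d (i + (n₀ + 1)) : ℝ) * w (i + (n₀ + 1))) :=
    (summable_nat_add_iff (n₀ + 1)).mpr hs
  have htail : (d n₀ : ℝ) * w n₀ = - ∑' i, (d (i + (n₀ + 1)) : ℝ) * w (i + (n₀ + 1)) := by
    rw [h0, hrange] at hsplit
    linarith
  -- bound each term of the tail
  have hub3 : ∀ i : ℕ, |(d (i + (n₀ + 1)) : ℝ) * w (i + (n₀ + 1))| ≤
      3 * w (i + (n₀ + 1)) - (if i = j₁ then w n₁ else 0) := by
    intro i
    rw [abs_mul, abs_of_nonneg (w_nonneg _)]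
    by_cases hi : i = j₁
    · rw [if_pos hi, hi, hj₁]
      have h2 : |d n₁| ≤ 2 := by
        apply abs_le.mpr
        constructor
        · have := hlb n₁; omega
        · exact hub n₁
      have h2' : |(d n₁ : ℝ)| ≤ 2 := by
        rw [← Int.cast_abs]
        exact_mod_cast h2
      nlinarith [w_pos n₁]
    · rw [if_neg hi]
      have h3 : |d (i + (n₀ + 1))| ≤ 3 := by
        apply abs_le.mpr
        exact ⟨hlb _, by have := hub (i + (n₀ + 1)); omega⟩
      have h3' : |(d (i + (n₀ + 1)) : ℝ)| ≤ 3 := by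
        rw [← Int.cast_abs]
        exact_mod_cast h3
      nlinarith [w_pos (i + (n₀ + 1)), w_nonneg (i + (n₀ + 1))]
  -- summability of the bounding function
  have hsw : Summable (fun i => w (i + (n₀ + 1))) := (summable_nat_add_iff (n₀ + 1)).mpr summable_w
  have hsite : Summable (fun i : ℕ => if i = j₁ then w n₁ else 0) := (hasSum_ite_eq j₁ (w n₁)).summable
  have hsbound : Summable (fun i => 3 * w (i + (n₀ + 1)) - (if i = j₁ then w n₁ else 0)) :=
    (hsw.mul_left 3).sub hsite
  have habs_sum : Summable (fun i => |(d (i + (n₀ + 1)) : ℝ) * w (i + (n₀ + 1))|) := htsum.abs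
  -- the bound on the tail
  have hbound : |∑' i, (d (i + (n₀ + 1)) : ℝ) * w (i + (n₀ + 1))| ≤ w n₀ - w n₁ := by
    calc |∑' i, (d (i + (n₀ + 1)) : ℝ) * w (i + (n₀ + 1))|
        ≤ ∑' i, |(d (i + (n₀ + 1)) : ℝ) * w (i + (n₀ + 1))| := by
          have hn := norm_tsum_le_tsum_norm (f := fun i => (d (i + (n₀ + 1)) : ℝ) * w (i + (n₀ + 1))) (by simp only [Real.norm_eq_abs]; exact habs_sum)
          simp only [Real.norm_eq_abs] at hn
          exact hn
      _ ≤ ∑' i, (3 * w (i + (n₀ + 1)) - (if i = j₁ then w n₁ else 0)) :=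
          Summable.tsum_le_tsum hub3 habs_sum hsbound
      _ = 3 * (∑' i, w (i + (n₀ + 1))) - w n₁ := by
          rw [Summable.tsum_sub (hsw.mul_left 3) hsite, tsum_mul_left, (hasSum_ite_eq j₁ (w n₁)).tsum_eq]
      _ = w n₀ - w n₁ := by
          rw [tsum_w_tail (n₀ + 1)]
          have : (3:ℝ) * ((4:ℝ)⁻¹ ^ (n₀ + 1) / 3) = w n₀ := by
            rw [w]; ring
          rw [this]
  have hd1 : (1:ℝ) ≤ |(d n₀ : ℝ)| := by
    have h1 : 1 ≤ |d n₀| := Int.one_le_abs hn₀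
    rw [← Int.cast_abs]
    exact_mod_cast h1
  have hw₀ : w n₀ ≤ |(d n₀ : ℝ) * w n₀| := by
    rw [abs_mul, abs_of_nonneg (w_nonneg _)]
    nlinarith [w_pos n₀]
  rw [htail, abs_neg] at hw₀
  have := w_pos n₁
  linarith

/-- The master digit-comparison lemma. -/
lemma key (p f e q g : ℕ → Bool) (hg : {n | g n = true}.Finite)
    (heq : φ p + φ f = φ e + φ q + φ g) :
    ∀ n, ((p n).toNat : ℤ) + (f n).toNat = (e n).toNat + (q n).toNat + (g n).toNat := by
  set d : ℕ → ℤ := fun n =>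
    ((p n).toNat : ℤ) + (f n).toNat - (e n).toNat - (q n).toNat - (g n).toNat with hd
  have hsum : HasSum (fun n => (d n : ℝ) * w n) 0 := by
    have h1 := ((((hasSum_φ p).add (hasSum_φ f)).sub (hasSum_φ e)).sub (hasSum_φ q)).sub
      (hasSum_φ g)
    have h2 : φ p + φ f - φ e - φ q - φ g = 0 := by linarith
    rw [h2] at h1
    have h3 : (fun n => (d n : ℝ) * w n) =
        fun n => term p n + term f n - term e n - term q n - term g n := by
      funext n
      simp only [hd, term]
      push_cast
      ring
    rw [h3]
    exact h1
  have hbp : ∀ n, (p n).toNat ≤ 1 := fun n => toNat_le_one _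
  have hbf : ∀ n, (f n).toNat ≤ 1 := fun n => toNat_le_one _
  have hbe : ∀ n, (e n).toNat ≤ 1 := fun n => toNat_le_one _
  have hbq : ∀ n, (q n).toNat ≤ 1 := fun n => toNat_le_one _
  have hbg : ∀ n, (g n).toNat ≤ 1 := fun n => toNat_le_one _
  have hfin : {n | d n = -3}.Finite := by
    apply hg.subset
    intro n hn
    simp only [Set.mem_setOf_eq, hd] at hn
    have h1 := hbp n; have h2 := hbf n; have h3 := hbe n; have h4 := hbq n; have h6 := hbg n
    have h5 : (g n).toNat = 1 := by omega
    simp only [Set.mem_setOf_eq]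
    cases hgval : g n
    · rw [hgval] at h5; simp at h5
    · rfl
  have h0 := digit_zero d
    (by intro n; have := hbp n; have := hbf n; have := hbe n; have := hbq n; have := hbg n
        simp only [hd]; omega)
    (by intro n; have := hbp n; have := hbf n; have := hbe n; have := hbq n; have := hbg n
        simp only [hd]; omega)
    hfin hsum.tsum_eq hsum.summable
  intro n
  have := h0 n
  simp only [hd] at this
  omega

/-- strict monotonicity of φ -/
lemma φ_lt {b b' : ℕ → Bool} (hle : ∀ n, (b n).toNat ≤ (b' n).toNat) (j : ℕ)
    (hj : b j = false) (hj' : b' j = true) : φ b < φ b' := by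
  apply Summable.tsum_lt_tsum (i := j)
  · intro n
    apply mul_le_mul_of_nonneg_right _ (w_nonneg n)
    exact_mod_cast hle n
  · simp only [term, hj, hj']
    simp [w_pos j]
  · exact summable_term b
  · exact summable_term b'

lemma continuous_φ : Continuous φ := by
  apply continuous_tsum (u := w) (f := fun n (b : ℕ → Bool) => term b n)
  · intro n
    have h1 : Continuous (fun v : Bool => ((v.toNat : ℝ) * w n)) := continuous_of_discreteTopology
    exact h1.comp (continuous_apply n)
  · exact summable_w
  · intro n b
    rw [Real.norm_eq_abs, abs_of_nonneg (term_nonneg b n)]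
    exact term_le b n

/-- the compact Cantor-like set -/
def K0 : Set ℝ := Set.range φ

lemma isCompact_K0 : IsCompact K0 := isCompact_range continuous_φ

/-- the points of K0 with infinitely many zero digits -/
def Y : Set ℝ := {x | ∃ b, x = φ b ∧ {n | b n = false}.Infinite}

/-- the set of "safe" translations, avoiding Y entirely -/
def T1 : Set ℝ := {t | ∀ y ∈ Y, y - t ∉ K0}

/-- the full family of translations -/
def T : Set ℝ := (Set.range fun n : ℕ => -w n) ∪ T1

/-- the difference set, a compact Cantor-like set -/
def D : Set ℝ := {v | ∃ a b, v = φ a - φ b}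

lemma isClosed_D : IsClosed D := by
  have hco : IsCompact ((fun pq : (ℕ → Bool) × (ℕ → Bool) => φ pq.1 - φ pq.2) '' Set.univ) :=
    isCompact_univ.image ((continuous_φ.comp continuous_fst).sub (continuous_φ.comp continuous_snd))
  have hD : D = (fun pq : (ℕ → Bool) × (ℕ → Bool) => φ pq.1 - φ pq.2) '' Set.univ := by
    ext v
    constructor
    · rintro ⟨a, b, h⟩
      exact ⟨(a, b), Set.mem_univ _, h.symm⟩
    · rintro ⟨⟨a, b⟩, -, h⟩
      exact ⟨a, b, h.symm⟩
  rw [hD]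
  exact hco.isClosed

lemma YsubD : ∀ y ∈ Y, ∀ k ∈ K0, y - k ∈ D := by
  rintro y ⟨b, rfl, -⟩ k ⟨b', rfl⟩
  exact ⟨b, b', rfl⟩

/-- adding w n to φ b when digit n is free -/
lemma add_w_mem {b : ℕ → Bool} {n : ℕ} (h : b n = false) : φ b + w n ∈ K0 := by
  refine ⟨fun i => b i || decide (i = n), ?_⟩
  have h1 : HasSum (fun i => term b i + term (fun i => decide (i = n)) i)
      (φ b + w n) := by
    have := (hasSum_φ b).add (hasSum_φ (fun i => decide (i = n)))
    rwa [φ_single] at this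
  have h2 : (fun i => term b i + term (fun i => decide (i = n)) i) =
      term (fun i => b i || decide (i = n)) := by
    funext i
    by_cases hi : i = n
    · subst hi
      simp [term, h]
    · simp [term, hi]
  rw [h2] at h1
  exact (hasSum_φ _).unique h1

/-- conversely, if φ b + w n has digits 0/1 then digit n of b was 0. -/
lemma mem_add_w {b : ℕ → Bool} {n : ℕ} (h : φ b + w n ∈ K0) : b n = false := by
  obtain ⟨e, he⟩ := h
  have heq : φ b + φ (fun i => decide (i = n)) =
      φ e + φ (fun _ => false) + φ (fun _ => false) := by
    rw [φ_single, φ_bot]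
    linarith [he]
  have hd := key b (fun i => decide (i = n)) e (fun _ => false) (fun _ => false)
    (by simp) heq
  cases hb : b n
  · rfl
  · exfalso
    have hdn := hd n
    simp only [hb] at hdn
    simp at hdn
    have := toNat_le_one (e n)
    omega

lemma neg_w_inj : Function.Injective (fun n : ℕ => -w n) := fun a b hab =>
  w_inj (by simpa using hab)

/-- covering for points of Y -/
lemma cover_Y {x : ℝ} (hx : x ∈ Y) : {t | t ∈ T ∧ x - t ∈ K0}.Infinite := by
  obtain ⟨b, rfl, hbinf⟩ := hx
  apply Set.Infinite.mono (t := {t | t ∈ T ∧ φ b - t ∈ K0})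
    (s := (fun n : ℕ => -w n) '' {n | b n = false})
  · rintro t ⟨n, hn, rfl⟩
    refine ⟨Or.inl ⟨n, rfl⟩, ?_⟩
    have h1 : φ b - -w n = φ b + w n := by ring
    rw [h1]
    exact add_w_mem hn
  · exact Set.Infinite.image (neg_w_inj.injOn) hbinf

/-- covering for points not in Y -/
lemma cover_nonY {x : ℝ} (hx : x ∉ Y) : {t | t ∈ T ∧ x - t ∈ K0}.Infinite := by
  classical
  by_cases hxD : x ∈ D
  · -- x has a balanced digit expansion
    obtain ⟨a, b, hab⟩ := hxD
    set p : ℕ → Bool := fun n => a n && !b n with hpdef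
    set q : ℕ → Bool := fun n => b n && !a n with hqdef
    have hpq : ∀ n, ¬(p n = true ∧ q n = true) := by
      intro n hn
      obtain ⟨h1, h2⟩ := hn
      simp only [hpdef, hqdef] at h1 h2
      cases ha : a n <;> cases hb : b n <;> rw [ha, hb] at h1 h2 <;> simp_all
    have hx' : x = φ p - φ q := by
      have h1 : HasSum (fun n => term a n - term b n) (φ a - φ b) :=
        (hasSum_φ a).sub (hasSum_φ b)
      have h2 : (fun n => term a n - term b n) = (fun n => term p n - term q n) := by
        funext n
        simp only [hpdef, hqdef, term]
        cases ha : a n <;> cases hb : b n <;> simp [ha, hb]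
      rw [h2] at h1
      have h3 : HasSum (fun n => term p n - term q n) (φ p - φ q) :=
        (hasSum_φ p).sub (hasSum_φ q)
      rw [hab, h1.unique h3]
    by_cases hex : ∃ j, q j = true
    · -- case 2: x has a negative digit
      obtain ⟨j, hj⟩ := hex
      have hpj : p j = false := by
        cases hp : p j
        · rfl
        · exact absurd ⟨hp, hj⟩ (hpq j)
      have key_lt : ∀ {u v : ℕ}, u < v →
          φ (fun i => decide (i ≤ u)) < φ (fun i => decide (i ≤ v)) := by
        intro u v huv
        apply φ_lt (j := v)
        · intro n
          by_cases hn : n ≤ u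
          · have hnv : n ≤ v := le_trans hn huv.le
            simp [hn, hnv]
          · simp [hn]
        · simpa using huv
        · simp
      apply Set.Infinite.mono
        (s := (fun m : ℕ => x - φ (fun i => decide (i ≤ m))) '' Set.Ici j)
      · rintro t ⟨m, hm, rfl⟩
        have hmj : j ≤ m := hm
        constructor
        · refine Or.inr ?_
          intro y hy hymem
          obtain ⟨ee, rfl, he⟩ := hy
          obtain ⟨ff, hff⟩ := hymem
          have hff' : φ ff = φ ee - (x - φ (fun i => decide (i ≤ m))) := hff
          have heq : φ p + φ ff = φ ee + φ q + φ (fun i => decide (i ≤ m)) := by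
            rw [hx'] at hff'
            linarith [hff']
          have hgfin : {n | (fun i => decide (i ≤ m)) n = true}.Finite := by
            apply (Set.finite_Iic m).subset
            intro n hn
            simp only [Set.mem_setOf_eq] at hn
            simpa [Set.mem_Iic] using of_decide_eq_true hn
          have hdig := key p ff ee q (fun i => decide (i ≤ m)) hgfin heq
          have hdj : ((p j).toNat : ℤ) + ((ff j).toNat : ℤ) =
              ((ee j).toNat : ℤ) + ((q j).toNat : ℤ) + ((decide (j ≤ m)).toNat : ℤ) := hdig j
          rw [hpj, hj, show (decide (j ≤ m)) = true from by simpa using hmj] at hdj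
          simp only [Bool.toNat_true, Bool.toNat_false] at hdj
          have := toNat_le_one (ff j)
          omega
        · have h5 : x - (x - φ (fun i => decide (i ≤ m))) = φ (fun i => decide (i ≤ m)) := by
            ring
          rw [h5]
          exact ⟨_, rfl⟩
      · apply Set.Infinite.image _ (Set.Ici_infinite _)
        intro m₁ _ m₂ _ hval
        by_contra hne
        have hval' : x - φ (fun i => decide (i ≤ m₁)) = x - φ (fun i => decide (i ≤ m₂)) := hval
        have hAB : φ (fun i => decide (i ≤ m₁)) = φ (fun i => decide (i ≤ m₂)) := by
          linarith [hval']
        rcases lt_or_gt_of_ne hne with h | h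
        · exact absurd hAB (ne_of_lt (key_lt h))
        · exact absurd hAB.symm (ne_of_lt (key_lt h))
    · -- case 3: x = φ p with finitely many zero digits
      push_neg at hex
      have hq0 : ∀ j, q j = false := by
        intro j
        cases hqj : q j
        · rfl
        · exact absurd hqj (hex j)
      have hφq : φ q = 0 := by
        rw [φ]
        convert tsum_zero with n
        simp [term, hq0 n]
      have hxp : x = φ p := by rw [hx', hφq]; ring
      by_cases hpinf : {n | p n = false}.Infinite
      · exact absurd ⟨p, hxp, hpinf⟩ hx
      · have hpfin : {n | p n = false}.Finite := Set.not_infinite.mp hpinf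
        obtain ⟨M, hM⟩ := hpfin.bddAbove
        have hpt : ∀ n, M < n → p n = true := by
          intro n hn
          cases hpn : p n
          · exact absurd (hM hpn) (by omega)
          · rfl
        have key_lt : ∀ {u v : ℕ}, u < v →
            φ (fun i => decide (v < i)) < φ (fun i => decide (u < i)) := by
          intro u v huv
          apply φ_lt (j := u + 1)
          · intro n
            by_cases hn : v < n
            · have hun : u < n := by omega
              simp [hn, hun]
            · simp [hn]
          · simpa using huv
          · simp
        apply Set.Infinite.mono
          (s := (fun m : ℕ => φ (fun i => decide (m < i))) '' Set.Ici M)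
        · rintro t ⟨m, hm, rfl⟩
          have hmM : M ≤ m := hm
          have hsplit : x = φ (fun i => p i && decide (i ≤ m)) + φ (fun i => decide (m < i)) := by
            have h1 : HasSum
                (fun n => term (fun i => p i && decide (i ≤ m)) n +
                  term (fun i => decide (m < i)) n)
                (φ (fun i => p i && decide (i ≤ m)) + φ (fun i => decide (m < i))) :=
              (hasSum_φ _).add (hasSum_φ _)
            have h2 : (fun n => term (fun i => p i && decide (i ≤ m)) n +
                term (fun i => decide (m < i)) n) = term p := by
              funext n
              by_cases hn : n ≤ m
              · have hn' : ¬ (m < n) := by omega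
                simp [term, hn, hn']
              · have hn2 : m < n := by omega
                have hptn := hpt n (by omega)
                simp [term, hn, hn2, hptn]
            rw [h2] at h1
            rw [hxp]
            exact (hasSum_φ p).unique h1
          constructor
          · refine Or.inr ?_
            intro y hy hymem
            obtain ⟨ee, rfl, he⟩ := hy
            obtain ⟨ff, hff⟩ := hymem
            have hff' : φ ff = φ ee - φ (fun i => decide (m < i)) := hff
            have heq : φ (fun i => decide (m < i)) + φ ff =
                φ ee + φ (fun _ => false) + φ (fun _ => false) := by
              rw [φ_bot]
              linarith [hff']
            have hdig := key (fun i => decide (m < i)) ff ee (fun _ => false) (fun _ => false)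
              (by simp) heq
            have hee : ∀ n, m < n → ee n = true := by
              intro n hn
              have hdn : ((decide (m < n)).toNat : ℤ) + ((ff n).toNat : ℤ) =
                  ((ee n).toNat : ℤ) + (((false : Bool)).toNat : ℤ) +
                  (((false : Bool)).toNat : ℤ) := hdig n
              rw [show (decide (m < n)) = true from by simpa using hn] at hdn
              simp only [Bool.toNat_true, Bool.toNat_false] at hdn
              have h1 := toNat_le_one (ff n)
              have h2 := toNat_le_one (ee n)
              cases heen : ee n
              · exfalso
                rw [heen] at hdn
                simp only [Bool.toNat_false] at hdn
                omega
              · rfl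
            apply he
            apply (Set.finite_Iic m).subset
            intro n hn
            simp only [Set.mem_setOf_eq] at hn
            simp only [Set.mem_Iic]
            by_contra hcon
            have h9 := hee n (by omega)
            rw [h9] at hn
            simp at hn
          · have h6 : x - φ (fun i => decide (m < i)) = φ (fun i => p i && decide (i ≤ m)) := by
              rw [hsplit]; ring
            rw [h6]
            exact ⟨_, rfl⟩
        · apply Set.Infinite.image _ (Set.Ici_infinite _)
          intro m₁ _ m₂ _ hval
          by_contra hne
          have hval' : φ (fun i => decide (m₁ < i)) = φ (fun i => decide (m₂ < i)) := hval
          rcases lt_or_gt_of_ne hne with h | h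
          · exact absurd hval'.symm (ne_of_lt (key_lt h))
          · exact absurd hval' (ne_of_lt (key_lt h))
  · -- x ∉ D : nearby small translates work
    have hop : ∃ ε > 0, Metric.ball x ε ⊆ Dᶜ :=
      Metric.isOpen_iff.mp isClosed_D.isOpen_compl x hxD
    obtain ⟨ε, hε, hball⟩ := hop
    have hw0 : Filter.Tendsto w Filter.atTop (nhds 0) := by
      have hbase := tendsto_pow_atTop_nhds_zero_of_lt_one (r := (4:ℝ)⁻¹)
        (by norm_num) (by norm_num)
      have hcomp := hbase.comp (Filter.tendsto_add_atTop_nat 1)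
      have hfun : ((fun k : ℕ => (4:ℝ)⁻¹ ^ k) ∘ (fun n : ℕ => n + 1)) = w := by
        funext n
        simp [w, Function.comp]
      rwa [hfun] at hcomp
    obtain ⟨N, hN⟩ := Metric.tendsto_atTop.mp hw0 ε hε
    apply Set.Infinite.mono (s := (fun n : ℕ => x - w n) '' Set.Ici N)
    · rintro t ⟨n, hn, rfl⟩
      have hnN : N ≤ n := hn
      have hwε : w n < ε := by
        have := hN n hnN
        rwa [Real.dist_eq, sub_zero, abs_of_nonneg (w_nonneg n)] at this
      constructor
      · refine Or.inr ?_
        intro y hy hymem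
        obtain ⟨ee, rfl, he⟩ := hy
        obtain ⟨ff, hff⟩ := hymem
        have hff' : φ ff = φ ee - (x - w n) := hff
        have hmem : x - w n ∈ D := ⟨ee, ff, by linarith [hff']⟩
        have hball' : x - w n ∈ Metric.ball x ε := by
          rw [Metric.mem_ball, Real.dist_eq]
          rw [show x - w n - x = -(w n) from by ring, abs_neg, abs_of_nonneg (w_nonneg n)]
          exact hwε
        exact hball hball' hmem
      · have h7 : x - (x - w n) = w n := by ring
        rw [h7]
        exact ⟨fun i => decide (i = n), φ_single n⟩
    · apply Set.Infinite.image _ (Set.Ici_infinite _)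
      intro m₁ _ m₂ _ hval
      have hval' : x - w m₁ = x - w m₂ := hval
      have hww : w m₁ = w m₂ := by linarith [hval']
      exact w_inj hww

lemma cover (x : ℝ) : {t | t ∈ T ∧ x - t ∈ K0}.Infinite := by
  by_cases hx : x ∈ Y
  · exact cover_Y hx
  · exact cover_nonY hx


lemma mem_image_iff {t x : ℝ} : x ∈ (fun y => y + t) '' K0 ↔ x - t ∈ K0 := by
  constructor
  · rintro ⟨k, hk, hkt⟩
    have : x - t = k := by simp only at hkt; linarith
    rwa [this]
  · intro h
    exact ⟨x - t, h, by ring⟩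

end Stmt15
end

/-- There is an `ω`-fold cover of `ℝ` by pairwise distinct translates of a
single compact set which cannot be decomposed into two disjoint subfamilies
each covering `ℝ`. -/
theorem stmt_15 :
    ∃ (K : Set ℝ) (T : Set ℝ), IsCompact K ∧
      (∀ t₁ ∈ T, ∀ t₂ ∈ T, (fun y => y + t₁) '' K = (fun y => y + t₂) '' K → t₁ = t₂) ∧
      (∀ x : ℝ, {t | t ∈ T ∧ x ∈ (fun y => y + t) '' K}.Infinite) ∧
      ∀ S ⊆ T, ¬((∀ x : ℝ, ∃ t ∈ S, x ∈ (fun y => y + t) '' K) ∧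
                 (∀ x : ℝ, ∃ t ∈ T \ S, x ∈ (fun y => y + t) '' K)) := by
  classical
  refine ⟨Stmt15.K0, Stmt15.T, Stmt15.isCompact_K0, ?_, ?_, ?_⟩
  · -- distinctness of translates
    intro t₁ _ t₂ _ him
    have h0 : (0:ℝ) ∈ Stmt15.K0 := ⟨fun _ => false, Stmt15.φ_bot⟩
    have h1 : t₁ ∈ (fun y => y + t₂) '' Stmt15.K0 := by
      rw [← him]
      exact ⟨0, h0, by ring⟩
    have h2 : t₂ ∈ (fun y => y + t₁) '' Stmt15.K0 := by
      rw [him]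
      exact ⟨0, h0, by ring⟩
    rw [Stmt15.mem_image_iff] at h1 h2
    obtain ⟨b1, hb1⟩ := h1
    obtain ⟨b2, hb2⟩ := h2
    have hp1 := Stmt15.φ_nonneg b1
    have hp2 := Stmt15.φ_nonneg b2
    rw [hb1] at hp1
    rw [hb2] at hp2
    linarith
  · -- ω-fold cover
    intro x
    apply Set.Infinite.mono _ (Stmt15.cover x)
    intro t ht
    exact ⟨ht.1, Stmt15.mem_image_iff.mpr ht.2⟩
  · -- indecomposability
    rintro S hS ⟨h1, h2⟩
    by_cases hAinf : {n : ℕ | -Stmt15.w n ∈ S}.Infinite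
    · -- the complementary family misses a witness point
      have hxY : Stmt15.φ (fun n => decide (n ∉ {n : ℕ | -Stmt15.w n ∈ S})) ∈ Stmt15.Y := by
        refine ⟨fun n => decide (n ∉ {n : ℕ | -Stmt15.w n ∈ S}), rfl, ?_⟩
        have hset : {n | (fun n => decide (n ∉ {n : ℕ | -Stmt15.w n ∈ S})) n = false} =
            {n : ℕ | -Stmt15.w n ∈ S} := by
          ext n
          simp
        rw [hset]
        exact hAinf
      obtain ⟨t, ht, hxt⟩ := h2 (Stmt15.φ (fun n => decide (n ∉ {n : ℕ | -Stmt15.w n ∈ S})))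
      rw [Stmt15.mem_image_iff] at hxt
      rcases ht.1 with hT0 | hT1
      · obtain ⟨n, hn⟩ := hT0
        have heq : Stmt15.φ (fun n => decide (n ∉ {n : ℕ | -Stmt15.w n ∈ S})) - t =
            Stmt15.φ (fun n => decide (n ∉ {n : ℕ | -Stmt15.w n ∈ S})) + Stmt15.w n := by
          rw [← hn]; ring
        rw [heq] at hxt
        have hfalse := Stmt15.mem_add_w hxt
        have hnA : -Stmt15.w n ∈ S := by simpa using hfalse
        apply ht.2
        have hnt : -Stmt15.w n = t := hn
        rwa [hnt] at hnA
      · exact hT1 _ hxY hxt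
    · -- S itself misses a witness point
      have hAfin : {n : ℕ | -Stmt15.w n ∈ S}.Finite := Set.not_infinite.mp hAinf
      have hxY : Stmt15.φ (fun n => decide (n ∈ {n : ℕ | -Stmt15.w n ∈ S})) ∈ Stmt15.Y := by
        refine ⟨fun n => decide (n ∈ {n : ℕ | -Stmt15.w n ∈ S}), rfl, ?_⟩
        have hset : {n | (fun n => decide (n ∈ {n : ℕ | -Stmt15.w n ∈ S})) n = false} =
            {n : ℕ | -Stmt15.w n ∈ S}ᶜ := by
          ext n
          simp
        rw [hset]
        exact hAfin.infinite_compl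
      obtain ⟨t, htS, hxt⟩ := h1 (Stmt15.φ (fun n => decide (n ∈ {n : ℕ | -Stmt15.w n ∈ S})))
      rw [Stmt15.mem_image_iff] at hxt
      rcases hS htS with hT0 | hT1
      · obtain ⟨n, hn⟩ := hT0
        have heq : Stmt15.φ (fun n => decide (n ∈ {n : ℕ | -Stmt15.w n ∈ S})) - t =
            Stmt15.φ (fun n => decide (n ∈ {n : ℕ | -Stmt15.w n ∈ S})) + Stmt15.w n := by
          rw [← hn]; ring
        rw [heq] at hxt
        have hfalse := Stmt15.mem_add_w hxt
        have hnA : -Stmt15.w n ∉ S := by simpa using hfalse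
        apply hnA
        have hnt : -Stmt15.w n = t := hn
        rwa [hnt]
      · exact hT1 _ hxY hxt
end

section
/- Let H be a cover of ℝ by closed sets with |H| < cov(M), where cov(M) is the least number of meager sets covering ℝ. Then H has a countable subfamily that still covers ℝ. -/
open Cardinal

/-!
Let `P` be the set of points of `ℝ` having no neighbourhood covered by countably many members of
`H`. By the Lindelöf property, either `P` is empty and `H` has a countable subcover, or `P` is a
nonempty closed set in which no member `s` of `H` has nonempty relative interior (otherwise `s`,
together with countably many members covering `ℝ \ P`, would cover an open set meeting `P`).

In the second case the cover of `P` is transported to a meagre cover of `ℝ` of size `#H`, which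
contradicts `#H < cov(M)`. The transport goes through Baire space `ℕ → ℕ`. Following a tree of
compact pieces of `P`, in which every piece is refined by all smaller rational intervals whose
interior meets `P`, `ℕ → ℕ` maps into `P` so that the members of `H` have nowhere dense
preimages. Conversely, reading off addresses in the tree of subdivisions of `(a, b)` into the
intervals `(b - (b - a) / 2 ^ k, b - (b - a) / 2 ^ (k + 1))` maps a comeagre subset of each
`(k, k + 1)` to `ℕ → ℕ` so that nowhere dense sets have nowhere dense preimages.
-/

open Set Filter Topology PiNat

section General

variable {X : Type*} [TopologicalSpace X]

theorem isNowhereDense_iff_forall_isOpen {A : Set X} :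
    IsNowhereDense A ↔
      ∀ U, IsOpen U → U.Nonempty → ∃ V ⊆ U, IsOpen V ∧ V.Nonempty ∧ Disjoint V A := by
  refine ⟨fun hA U hU hUne => ⟨U \ closure A, sdiff_subset, hU.sdiff isClosed_closure, ?_,
    disjoint_sdiff_left.mono_right subset_closure⟩, fun h => ?_⟩
  · by_contra hV
    rw [not_nonempty_iff_eq_empty, sdiff_eq_empty] at hV
    obtain ⟨x, hx⟩ := hUne
    rw [IsNowhereDense] at hA
    simpa [hA] using interior_maximal hV hU hx
  · by_contra hA
    obtain ⟨V, hVU, hV, ⟨x, hx⟩, hVA⟩ :=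
      h _ isOpen_interior (nonempty_iff_ne_empty.2 hA)
    exact (hVA.closure_right hV).ne_of_mem hx (interior_subset (hVU hx)) rfl

theorem Set.Countable.isMeagre [T1Space X] [∀ x : X, (𝓝[≠] x).NeBot] {s : Set X}
    (hs : s.Countable) : IsMeagre s := by
  rw [← biUnion_of_singleton s]
  exact isMeagre_biUnion hs fun x _ =>
    (isClosed_singleton.isNowhereDense_iff.2 (interior_singleton x)).isMeagre

theorem IsOpen.isNowhereDense_frontier {U : Set X} (hU : IsOpen U) :
    IsNowhereDense (frontier U) :=
  isClosed_frontier.isNowhereDense_iff.2 (frontier_compl U ▸ interior_frontier hU.isClosed_compl)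

theorem exists_countable_subcover_or_exists_isClosed_interior_eq_empty
    [HereditarilyLindelofSpace X] (H : Set (Set X)) :
    (∃ H' ⊆ H, H'.Countable ∧ ⋃₀ H' = Set.univ) ∨
      ∃ P : Set X, IsClosed P ∧ P.Nonempty ∧
        ∀ s ∈ H, interior ((↑) ⁻¹' s : Set P) = ∅ := by
  set 𝒰 : Set (Set X) := {U | IsOpen U ∧ ∃ c ⊆ H, c.Countable ∧ U ⊆ ⋃₀ c}
  obtain ⟨T, hTc, hT⟩ := eq_open_union_countable (fun U : 𝒰 => (U : Set X)) fun U => U.2.1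
  choose c hcH hcc hUc using fun U : 𝒰 => U.2.2
  set H₀ := ⋃ U ∈ T, c U
  have hH₀ : H₀ ⊆ H := iUnion₂_subset fun U _ => hcH U
  have hH₀c : H₀.Countable := hTc.biUnion fun U _ => hcc U
  have hW : ⋃₀ 𝒰 ⊆ ⋃₀ H₀ := by
    rw [sUnion_eq_iUnion, ← hT]
    refine iUnion₂_subset fun U hU => (hUc U).trans (sUnion_mono (subset_biUnion_of_mem hU))
  by_cases hWuniv : ⋃₀ 𝒰 = Set.univ
  · exact .inl ⟨H₀, hH₀, hH₀c, univ_subset_iff.1 (hWuniv ▸ hW)⟩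
  set P := (⋃₀ 𝒰)ᶜ
  refine .inr ⟨P, (isOpen_sUnion fun U hU => hU.1).isClosed_compl,
    nonempty_compl.2 hWuniv, fun s hs => ?_⟩
  obtain ⟨U, hU, hUs⟩ := isOpen_induced_iff.1 (isOpen_interior (s := ((↑) ⁻¹' s : Set P)))
  have hU𝒰 : U ∈ 𝒰 := by
    refine ⟨hU, insert s H₀, insert_subset hs hH₀, hH₀c.insert s, fun x hx => ?_⟩
    by_cases hxW : x ∈ ⋃₀ 𝒰
    · exact sUnion_mono (subset_insert s H₀) (hW hxW)
    · have hxU : (⟨x, hxW⟩ : P) ∈ Subtype.val ⁻¹' U := hx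
      exact ⟨s, mem_insert s H₀, interior_subset (s := Subtype.val ⁻¹' s) (hUs.subset hxU)⟩
  rw [← hUs, eq_empty_iff_forall_notMem]
  exact fun x hx => x.2 ⟨U, hU𝒰, hx⟩

end General

theorem PiNat.exists_cylinder_subset {E : ℕ → Type*} [∀ n, TopologicalSpace (E n)]
    [∀ n, DiscreteTopology (E n)] {U : Set (∀ n, E n)} (hU : IsOpen U) {y : ∀ n, E n}
    (hy : y ∈ U) : ∃ n, cylinder y n ⊆ U := by
  obtain ⟨_, ⟨x, n, rfl⟩, hyx, hxU⟩ :=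
    (isTopologicalBasis_cylinders E).exists_subset_of_mem_open hy hU
  exact ⟨n, mem_cylinder_iff_eq.1 hyx ▸ hxU⟩

theorem PiNat.cylinder_update_subset {E : ℕ → Type*} (y : ∀ n, E n) (n : ℕ) (k : E n) :
    cylinder (Function.update y n k) (n + 1) ⊆ cylinder y n :=
  (cylinder_anti _ n.le_succ).trans (mem_cylinder_iff_eq.1 (update_mem_cylinder y n k)).subset

section CompactScheme

variable {X : Type*} [TopologicalSpace X] (B : ℕ → Set X) (P : Set X)

-- Falling back to `m` makes every `k : ℕ` a child, so that branches are indexed by `ℕ → ℕ`.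
open scoped Classical in
noncomputable def compactChild (m k : ℕ) : ℕ :=
  if B k ⊆ B m ∧ (interior (B k) ∩ P).Nonempty then k else m

noncomputable def compactNode (m₀ : ℕ) (y : ℕ → ℕ) : ℕ → ℕ
  | 0 => m₀
  | n + 1 => compactChild B P (compactNode m₀ y n) (y n)

variable {B P}

theorem subset_compactChild (m k : ℕ) : B (compactChild B P m k) ⊆ B m := by
  unfold compactChild; split_ifs with h
  exacts [h.1, subset_rfl]

theorem nonempty_compactChild {m : ℕ} (hm : (interior (B m) ∩ P).Nonempty) (k : ℕ) :
    (interior (B (compactChild B P m k)) ∩ P).Nonempty := by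
  unfold compactChild; split_ifs with h
  exacts [h.2, hm]

theorem nonempty_compactNode {m₀ : ℕ} (hm₀ : (interior (B m₀) ∩ P).Nonempty) (y : ℕ → ℕ) :
    ∀ n, (interior (B (compactNode B P m₀ y n)) ∩ P).Nonempty
  | 0 => hm₀
  | n + 1 => nonempty_compactChild (nonempty_compactNode hm₀ y n) _

theorem compactNode_eq_of_mem_cylinder {m₀ : ℕ} {y z : ℕ → ℕ} :
    ∀ {n}, z ∈ cylinder y n → compactNode B P m₀ z n = compactNode B P m₀ y n
  | 0, _ => rfl
  | n + 1, h => by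
    simp only [compactNode, compactNode_eq_of_mem_cylinder (cylinder_anti y n.le_succ h),
      h n n.lt_succ_self]

theorem exists_compactChild_disjoint
    (hB : ∀ x, ∀ W ∈ 𝓝 x, ∃ k, B k ∈ 𝓝 x ∧ B k ⊆ W) {m : ℕ}
    (hm : (interior (B m) ∩ P).Nonempty) {s : Set X} (hs : IsClosed s)
    (hsP : interior ((↑) ⁻¹' s : Set P) = ∅) :
    ∃ k, compactChild B P m k = k ∧ Disjoint (B k) s := by
  obtain ⟨x, hxm, hxP, hxs⟩ : ∃ x ∈ interior (B m), ∃ hx : x ∈ P, x ∉ s := by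
    by_contra! h
    obtain ⟨x, hxm, hxP⟩ := hm
    have : (⟨x, hxP⟩ : P) ∈ interior ((↑) ⁻¹' s : Set P) :=
      interior_maximal (fun (y : P) hy => h y hy y.2)
        (isOpen_interior.preimage continuous_subtype_val) hxm
    simp [hsP] at this
  obtain ⟨k, hkx, hkW⟩ := hB x _ ((isOpen_interior.sdiff hs).mem_nhds ⟨hxm, hxs⟩)
  refine ⟨k, if_pos ⟨hkW.trans (sdiff_subset.trans interior_subset),
    x, mem_interior_iff_mem_nhds.2 hkx, hxP⟩, disjoint_left.2 fun y hy => (hkW hy).2⟩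

theorem IsClosed.exists_natNat_map_isNowhereDense_preimage [T2Space X]
    (hBc : ∀ k, IsCompact (B k))
    (hB : ∀ x, ∀ W ∈ 𝓝 x, ∃ k, B k ∈ 𝓝 x ∧ B k ⊆ W) (hP : IsClosed P) (hPne : P.Nonempty) :
    ∃ ψ : (ℕ → ℕ) → X, (∀ y, ψ y ∈ P) ∧
      ∀ s, IsClosed s → interior ((↑) ⁻¹' s : Set P) = ∅ → IsNowhereDense (ψ ⁻¹' s) := by
  obtain ⟨x, hx⟩ := hPne
  obtain ⟨m₀, hm₀, -⟩ := hB x Set.univ univ_mem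
  have hne := nonempty_compactNode (P := P) ⟨x, mem_interior_iff_mem_nhds.2 hm₀, hx⟩
  have hψ : ∀ y, (⋂ n, B (compactNode B P m₀ y n) ∩ P).Nonempty := fun y =>
    IsCompact.nonempty_iInter_of_sequence_nonempty_isCompact_isClosed _
      (fun n => inter_subset_inter_left _ (subset_compactChild _ _))
      (fun n => (hne y n).mono (inter_subset_inter_left _ interior_subset))
      ((hBc _).inter_right hP) fun n => ((hBc _).inter_right hP).isClosed
  choose ψ hψ using hψ
  refine ⟨ψ, fun y => (mem_iInter.1 (hψ y) 0).2, fun s hs hsP => ?_⟩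
  refine isNowhereDense_iff_forall_isOpen.2 fun U hU ⟨y, hy⟩ => ?_
  obtain ⟨n, hn⟩ := PiNat.exists_cylinder_subset hU hy
  obtain ⟨k, hk, hks⟩ := exists_compactChild_disjoint hB (hne y n) hs hsP
  refine ⟨cylinder (Function.update y n k) (n + 1), (cylinder_update_subset y n k).trans hn,
    isOpen_cylinder _ _ _, ⟨_, self_mem_cylinder _ _⟩, disjoint_left.2 fun z hz hzs => ?_⟩
  have hzk : compactNode B P m₀ z (n + 1) = k := by
    rw [compactNode_eq_of_mem_cylinder hz, compactNode,
      compactNode_eq_of_mem_cylinder (update_mem_cylinder y n k), Function.update_self, hk]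
  exact disjoint_left.1 hks (hzk ▸ (mem_iInter.1 (hψ z) (n + 1)).1) hzs

end CompactScheme

theorem exists_div_two_pow_lt (c : ℝ) {ε : ℝ} (hε : 0 < ε) : ∃ n : ℕ, c / 2 ^ n < ε := by
  obtain ⟨n, hn⟩ := pow_unbounded_of_one_lt (c / ε) one_lt_two
  exact ⟨n, (div_lt_iff₀ (by positivity)).2 (by rwa [div_lt_iff₀ hε, mul_comm] at hn)⟩

noncomputable section DyadicScheme

def dyadicPt (I : ℝ × ℝ) (k : ℕ) : ℝ := I.2 - (I.2 - I.1) / 2 ^ k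

def dyadicPiece (I : ℝ × ℝ) (k : ℕ) : ℝ × ℝ := (dyadicPt I k, dyadicPt I (k + 1))

def dyadicIndex (I : ℝ × ℝ) (x : ℝ) : ℕ := sInf {k | x < dyadicPt I (k + 1)}

variable {I : ℝ × ℝ}

theorem dyadicPt_zero (I : ℝ × ℝ) : dyadicPt I 0 = I.1 := by simp [dyadicPt]

theorem dyadicPiece_length (I : ℝ × ℝ) (k : ℕ) :
    (dyadicPiece I k).2 - (dyadicPiece I k).1 = (I.2 - I.1) / 2 ^ (k + 1) := by
  simp only [dyadicPiece, dyadicPt, pow_succ]; field_simp; ring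

theorem dyadicPt_strictMono (hI : I.1 < I.2) : StrictMono (dyadicPt I) :=
  strictMono_nat_of_lt_succ fun k => by
    have := dyadicPiece_length I k
    simp only [dyadicPiece] at this
    linarith [div_pos (sub_pos.2 hI) (by positivity : (0 : ℝ) < 2 ^ (k + 1))]

theorem dyadicPt_lt_snd (hI : I.1 < I.2) (k : ℕ) : dyadicPt I k < I.2 := by
  have : 0 < (I.2 - I.1) / 2 ^ k := div_pos (sub_pos.2 hI) (by positivity)
  simp only [dyadicPt]; linarith

theorem dyadicPiece_fst_lt_snd (hI : I.1 < I.2) (k : ℕ) :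
    (dyadicPiece I k).1 < (dyadicPiece I k).2 :=
  dyadicPt_strictMono hI k.lt_succ_self

theorem Ioo_dyadicPiece_subset (hI : I.1 < I.2) (k : ℕ) :
    Ioo (dyadicPiece I k).1 (dyadicPiece I k).2 ⊆ Ioo I.1 I.2 :=
  Ioo_subset_Ioo (dyadicPt_zero I ▸ (dyadicPt_strictMono hI).monotone k.zero_le)
    (dyadicPt_lt_snd hI _).le

theorem dyadicIndex_eq (hI : I.1 < I.2) {x : ℝ} {k : ℕ}
    (hx : x ∈ Ioo (dyadicPiece I k).1 (dyadicPiece I k).2) : dyadicIndex I x = k :=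
  le_antisymm (Nat.sInf_le hx.2) (le_csInf ⟨k, hx.2⟩ fun _ hj => not_lt.1 fun hjk =>
    (hj.trans_le ((dyadicPt_strictMono hI).monotone hjk)).not_gt hx.1)

theorem mem_Ico_dyadicIndex (hI : I.1 < I.2) {x : ℝ} (hx : x ∈ Ioo I.1 I.2) :
    x ∈ Ico (dyadicPt I (dyadicIndex I x)) (dyadicPt I (dyadicIndex I x + 1)) := by
  have hne : {k | x < dyadicPt I (k + 1)}.Nonempty := by
    obtain ⟨k, hk⟩ := exists_div_two_pow_lt (I.2 - I.1) (sub_pos.2 hx.2)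
    exact ⟨k, lt_of_lt_of_le (by simp only [dyadicPt]; linarith)
      ((dyadicPt_strictMono hI).monotone k.le_succ)⟩
  refine ⟨?_, Nat.sInf_mem hne⟩
  rcases h : dyadicIndex I x with _ | k
  · exact dyadicPt_zero I ▸ hx.1.le
  · exact not_lt.1 (Nat.notMem_of_lt_sInf (h ▸ k.lt_succ_self : k < dyadicIndex I x))

theorem Ioo_subset_closure_iUnion_dyadicPiece (hI : I.1 < I.2) :
    Ioo I.1 I.2 ⊆ closure (⋃ k, Ioo (dyadicPiece I k).1 (dyadicPiece I k).2) := fun x hx =>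
  closure_mono (subset_iUnion _ (dyadicIndex I x)) <| by
    rw [closure_Ioo (dyadicPiece_fst_lt_snd hI _).ne]
    exact Ico_subset_Icc_self (mem_Ico_dyadicIndex hI hx)

def dyadicNode (I : ℝ × ℝ) (y : ℕ → ℕ) : ℕ → ℝ × ℝ
  | 0 => I
  | n + 1 => dyadicPiece (dyadicNode I y n) (y n)

def dyadicBranch (I : ℝ × ℝ) (x : ℝ) : ℕ → ℝ × ℝ
  | 0 => I
  | n + 1 => dyadicPiece (dyadicBranch I x n) (dyadicIndex (dyadicBranch I x n) x)

def dyadicAddress (I : ℝ × ℝ) (x : ℝ) (n : ℕ) : ℕ := dyadicIndex (dyadicBranch I x n) x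

def dyadicLevel (I : ℝ × ℝ) (n : ℕ) : Set ℝ :=
  ⋃ y, Ioo (dyadicNode I y n).1 (dyadicNode I y n).2

theorem dyadicNode_fst_lt_snd (hI : I.1 < I.2) (y : ℕ → ℕ) :
    ∀ n, (dyadicNode I y n).1 < (dyadicNode I y n).2
  | 0 => hI
  | n + 1 => dyadicPiece_fst_lt_snd (dyadicNode_fst_lt_snd hI y n) _

theorem dyadicNode_length_le (hI : I.1 < I.2) (y : ℕ → ℕ) :
    ∀ n, (dyadicNode I y n).2 - (dyadicNode I y n).1 ≤ (I.2 - I.1) / 2 ^ n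
  | 0 => by simp [dyadicNode]
  | n + 1 => by
    have hJ := dyadicNode_fst_lt_snd hI y n
    calc _ = ((dyadicNode I y n).2 - (dyadicNode I y n).1) / 2 ^ (y n + 1) :=
          dyadicPiece_length _ _
      _ ≤ ((dyadicNode I y n).2 - (dyadicNode I y n).1) / 2 :=
          div_le_div_of_nonneg_left (by linarith) two_pos
            (le_self_pow₀ one_le_two (Nat.succ_ne_zero _))
      _ ≤ (I.2 - I.1) / 2 ^ n / 2 := by gcongr; exact dyadicNode_length_le hI y n
      _ = (I.2 - I.1) / 2 ^ (n + 1) := by rw [pow_succ, div_div]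

theorem Ioo_dyadicNode_antitone (hI : I.1 < I.2) (y : ℕ → ℕ) :
    Antitone fun n => Ioo (dyadicNode I y n).1 (dyadicNode I y n).2 :=
  antitone_nat_of_succ_le fun n => Ioo_dyadicPiece_subset (dyadicNode_fst_lt_snd hI y n) _

theorem dyadicNode_eq_of_mem_cylinder {y z : ℕ → ℕ} :
    ∀ {n}, z ∈ cylinder y n → dyadicNode I z n = dyadicNode I y n
  | 0, _ => rfl
  | n + 1, h => by
    simp only [dyadicNode, dyadicNode_eq_of_mem_cylinder (cylinder_anti y n.le_succ h),
      h n n.lt_succ_self]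

theorem dyadicNode_dyadicAddress (I : ℝ × ℝ) (x : ℝ) :
    ∀ n, dyadicNode I (dyadicAddress I x) n = dyadicBranch I x n
  | 0 => rfl
  | n + 1 => by rw [dyadicNode, dyadicBranch, dyadicNode_dyadicAddress I x n, dyadicAddress]

theorem dyadicAddress_mem_cylinder (hI : I.1 < I.2) {x : ℝ} {w : ℕ → ℕ} :
    ∀ {n}, x ∈ Ioo (dyadicNode I w n).1 (dyadicNode I w n).2 →
      dyadicAddress I x ∈ cylinder w n
  | 0, _ => fun _ h => absurd h (Nat.not_lt_zero _)
  | n + 1, hx => by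
    have ih := dyadicAddress_mem_cylinder hI (Ioo_dyadicNode_antitone hI w n.le_succ hx)
    refine mem_cylinder_iff.2 fun i hi => ?_
    rcases Nat.lt_succ_iff_lt_or_eq.1 hi with hi | rfl
    · exact ih i hi
    · rw [dyadicAddress, ← dyadicNode_dyadicAddress, dyadicNode_eq_of_mem_cylinder ih]
      exact dyadicIndex_eq (dyadicNode_fst_lt_snd hI w i) hx

theorem isOpen_dyadicLevel (I : ℝ × ℝ) (n : ℕ) : IsOpen (dyadicLevel I n) :=
  isOpen_iUnion fun _ => isOpen_Ioo

theorem dyadicLevel_zero (I : ℝ × ℝ) : dyadicLevel I 0 = Ioo I.1 I.2 :=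
  iUnion_const (Ioo I.1 I.2)

theorem dyadicLevel_subset_closure_succ (hI : I.1 < I.2) (n : ℕ) :
    dyadicLevel I n ⊆ closure (dyadicLevel I (n + 1)) :=
  iUnion_subset fun y =>
    (Ioo_subset_closure_iUnion_dyadicPiece (dyadicNode_fst_lt_snd hI y n)).trans <|
      closure_mono <| iUnion_mono' fun k => ⟨Function.update y n k, by
        rw [dyadicNode, dyadicNode_eq_of_mem_cylinder (update_mem_cylinder y n k),
          Function.update_self]⟩

theorem Ioo_subset_closure_dyadicLevel (hI : I.1 < I.2) :
    ∀ n, Ioo I.1 I.2 ⊆ closure (dyadicLevel I n)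
  | 0 => dyadicLevel_zero I ▸ subset_closure
  | n + 1 => (Ioo_subset_closure_dyadicLevel hI n).trans <|
    closure_minimal (dyadicLevel_subset_closure_succ hI n) isClosed_closure

theorem isMeagre_Ioo_diff_iInter_dyadicLevel (hI : I.1 < I.2) :
    IsMeagre (Ioo I.1 I.2 \ ⋂ n, dyadicLevel I n) := by
  rw [sdiff_iInter]
  refine isMeagre_iUnion fun n =>
    (isOpen_dyadicLevel I n).isNowhereDense_frontier.isMeagre.mono ?_
  rw [(isOpen_dyadicLevel I n).frontier_eq]
  exact sdiff_subset_sdiff_left (Ioo_subset_closure_dyadicLevel hI n)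

theorem mem_Ioo_dyadicNode_dyadicAddress (hI : I.1 < I.2) {x : ℝ} {n : ℕ}
    (hx : x ∈ dyadicLevel I n) :
    x ∈ Ioo (dyadicNode I (dyadicAddress I x) n).1 (dyadicNode I (dyadicAddress I x) n).2 := by
  obtain ⟨w, hw⟩ := mem_iUnion.1 hx
  rwa [dyadicNode_eq_of_mem_cylinder (dyadicAddress_mem_cylinder hI hw)]

theorem exists_Ioo_dyadicNode_subset (hI : I.1 < I.2) {x : ℝ}
    (hx : x ∈ ⋂ n, dyadicLevel I n) {U : Set ℝ} (hU : U ∈ 𝓝 x) :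
    ∃ n, Ioo (dyadicNode I (dyadicAddress I x) n).1 (dyadicNode I (dyadicAddress I x) n).2 ⊆ U := by
  obtain ⟨ε, hε, hεU⟩ := Metric.mem_nhds_iff.1 hU
  obtain ⟨n, hn⟩ := exists_div_two_pow_lt (I.2 - I.1) hε
  have hxn := mem_Ioo_dyadicNode_dyadicAddress hI (mem_iInter.1 hx n)
  have hlen := dyadicNode_length_le hI (dyadicAddress I x) n
  refine ⟨n, fun z hz => hεU ?_⟩
  rw [Metric.mem_ball, Real.dist_eq, abs_lt]
  constructor <;> linarith [hz.1, hz.2, hxn.1, hxn.2]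

theorem Real.exists_natNat_map_isNowhereDense_preimage_Ioo {a b : ℝ} (hab : a < b) :
    ∃ φ : ℝ → ℕ → ℕ, ∃ D ⊆ Ioo a b, IsMeagre (Ioo a b \ D) ∧
      ∀ A, IsNowhereDense A → IsNowhereDense (D ∩ φ ⁻¹' A) := by
  set I : ℝ × ℝ := (a, b)
  have hI : I.1 < I.2 := hab
  have hD : (⋂ n, dyadicLevel I n) ⊆ Ioo a b := dyadicLevel_zero I ▸ iInter_subset _ 0
  refine ⟨dyadicAddress I, _, hD, isMeagre_Ioo_diff_iInter_dyadicLevel hI,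
    fun A hA => isNowhereDense_iff_forall_isOpen.2 fun U hU hUne => ?_⟩
  by_cases hUab : (U ∩ Ioo a b).Nonempty
  swap
  · exact ⟨U, subset_rfl, hU, hUne, disjoint_left.2 fun x hxU hx =>
      hUab ⟨x, hxU, hD hx.1⟩⟩
  obtain ⟨x, ⟨hxU, hxab⟩, hxD⟩ :=
    (dense_of_mem_residual (isMeagre_Ioo_diff_iInter_dyadicLevel hI)).inter_open_nonempty _
      (hU.inter isOpen_Ioo) hUab
  set y := dyadicAddress I x
  obtain ⟨n, hnU⟩ := exists_Ioo_dyadicNode_subset hI (not_not.1 fun h => hxD ⟨hxab, h⟩)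
    (hU.mem_nhds hxU)
  obtain ⟨V, hVy, hV, ⟨w, hwV⟩, hVA⟩ := isNowhereDense_iff_forall_isOpen.1 hA _
    (isOpen_cylinder _ y n) ⟨y, self_mem_cylinder y n⟩
  obtain ⟨m, hm⟩ := PiNat.exists_cylinder_subset hV hwV
  have hwy : dyadicNode I w n = dyadicNode I y n := dyadicNode_eq_of_mem_cylinder (hVy hwV)
  -- Points of the node of `w` at level `max m n` lie in `U` and have addresses in `V`.
  refine ⟨Ioo (dyadicNode I w (max m n)).1 (dyadicNode I w (max m n)).2, ?_, isOpen_Ioo,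
    nonempty_Ioo.2 (dyadicNode_fst_lt_snd hI w _), disjoint_left.2 fun z hz hzA => ?_⟩
  · refine (Ioo_dyadicNode_antitone hI w (le_max_right m n)).trans ?_
    simpa only [hwy] using hnU
  · exact disjoint_left.1 hVA
      (hm (cylinder_anti w (le_max_left m n) (dyadicAddress_mem_cylinder hI hz))) hzA.2

end DyadicScheme

theorem Real.exists_natNat_map_isMeagre_preimage :
    ∃ φ : ℝ → ℕ → ℕ, ∃ D : Set ℝ, IsMeagre Dᶜ ∧
      ∀ A, IsNowhereDense A → IsMeagre (D ∩ φ ⁻¹' A) := by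
  choose φ D hDk hDm hφ using fun k : ℤ =>
    Real.exists_natNat_map_isNowhereDense_preimage_Ioo (lt_add_one (k : ℝ))
  have hfloor {k : ℤ} {x : ℝ} (hx : x ∈ D k) : ⌊x⌋ = k :=
    Int.floor_eq_iff.2 ⟨(hDk k hx).1.le, (hDk k hx).2⟩
  refine ⟨fun x => φ ⌊x⌋ x, ⋃ k, D k, ?_, fun A hA => ?_⟩
  · refine ((countable_range ((↑) : ℤ → ℝ)).isMeagre.union (isMeagre_iUnion hDm)).mono
      fun x hx => ?_
    by_cases hxk : (⌊x⌋ : ℝ) = x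
    · exact .inl ⟨_, hxk⟩
    · refine .inr (mem_iUnion.2 ⟨⌊x⌋, ⟨(Int.floor_le x).lt_of_ne hxk, Int.lt_floor_add_one x⟩,
        fun h => hx (mem_iUnion.2 ⟨_, h⟩)⟩)
  · refine (isMeagre_iUnion fun k => (hφ k A hA).isMeagre).mono ?_
    rintro x ⟨hx, hxA⟩
    obtain ⟨k, hk⟩ := mem_iUnion.1 hx
    exact mem_iUnion.2 ⟨k, hk, by simpa only [mem_preimage, hfloor hk] using hxA⟩

noncomputable def ratIcc (k : ℕ) : Set ℝ :=
  Icc ((Denumerable.ofNat (ℚ × ℚ) k).1 : ℝ) (Denumerable.ofNat (ℚ × ℚ) k).2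

theorem exists_ratIcc_mem_nhds_subset (x : ℝ) {W : Set ℝ} (hW : W ∈ 𝓝 x) :
    ∃ k, ratIcc k ∈ 𝓝 x ∧ ratIcc k ⊆ W := by
  obtain ⟨ε, hε, hεW⟩ := (nhds_basis_Icc_pos x).mem_iff.1 hW
  obtain ⟨q, hq⟩ := exists_rat_btwn (sub_lt_self x hε)
  obtain ⟨r, hr⟩ := exists_rat_btwn (lt_add_of_pos_right x hε)
  obtain ⟨k, hk⟩ : ∃ k, Denumerable.ofNat (ℚ × ℚ) k = (q, r) := ⟨_, Denumerable.ofNat_encode _⟩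
  refine ⟨k, ?_⟩
  simp only [ratIcc, hk]
  exact ⟨Icc_mem_nhds hq.2 hr.1, (Icc_subset_Icc hq.1.le hr.2.le).trans hεW⟩

theorem IsClosed.exists_isMeagre_cover {P : Set ℝ} (hP : IsClosed P)
    (hPne : P.Nonempty) (S : Set (Set ℝ)) (hScl : ∀ s ∈ S, IsClosed s) (hPS : P ⊆ ⋃₀ S)
    (hSP : ∀ s ∈ S, interior ((↑) ⁻¹' s : Set P) = ∅) :
    ∃ C : Set (Set ℝ), (∀ c ∈ C, IsMeagre c) ∧ #C ≤ #S + 1 ∧ ⋃₀ C = Set.univ := by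
  obtain ⟨ψ, hψP, hψ⟩ := hP.exists_natNat_map_isNowhereDense_preimage
    (fun _ => isCompact_Icc) exists_ratIcc_mem_nhds_subset hPne
  obtain ⟨φ, D, hD, hφ⟩ := Real.exists_natNat_map_isMeagre_preimage
  refine ⟨insert Dᶜ ((fun s => D ∩ φ ⁻¹' (ψ ⁻¹' s)) '' S), ?_, ?_, ?_⟩
  · rintro c (rfl | ⟨s, hs, rfl⟩)
    exacts [hD, hφ _ (hψ s (hScl s hs) (hSP s hs))]
  · exact mk_insert_le.trans (by gcongr; exact mk_image_le)
  · refine eq_univ_of_forall fun x => ?_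
    by_cases hx : x ∈ D
    · obtain ⟨s, hs, hxs⟩ := hPS (hψP (φ x))
      exact ⟨_, mem_insert_of_mem _ (mem_image_of_mem _ hs), hx, hxs⟩
    · exact ⟨Dᶜ, mem_insert _ _, hx⟩

/-- If `H` is a cover of `ℝ` by closed sets and `#H` is less than the covering
number of the meager ideal (expressed by: no family of meager sets of
cardinality at most `#H` covers `ℝ`), then `H` has a countable subcover. -/
theorem stmt_17 (H : Set (Set ℝ)) (hcl : ∀ s ∈ H, IsClosed s)
    (hcov : ⋃₀ H = Set.univ)
    (hsmall : ∀ C : Set (Set ℝ), (∀ s ∈ C, IsMeagre s) → #C ≤ #H →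
      ⋃₀ C ≠ Set.univ) :
    ∃ H' ⊆ H, H'.Countable ∧ ⋃₀ H' = Set.univ := by
  by_cases hHc : H.Countable
  · exact ⟨H, subset_rfl, hHc, hcov⟩
  obtain hH' | ⟨P, hP, hPne, hHP⟩ :=
    exists_countable_subcover_or_exists_isClosed_interior_eq_empty H
  · exact hH'
  obtain ⟨C, hCm, hCH, hC⟩ := hP.exists_isMeagre_cover hPne H hcl (hcov ▸ subset_univ P) hHP
  have hH : ℵ₀ ≤ #H := (lt_of_not_ge (mt le_aleph0_iff_set_countable.1 hHc)).le
  exact absurd hC (hsmall C hCm (hCH.trans_eq (add_one_eq hH)))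
end

section
/- Let X = (ω+1)^ω ∪ (ω+1)^{<ω}. For σ ∈ (ω+1)^{<ω} and n ≤ ω, let C_{σ⌢n} = {σ} ∪ { f ∈ (ω+1)^ω : σ⌢n ⊆ f }. Then the family C of all such sets C_{σ⌢n} is an ω-fold cover of X (every point lies in infinitely many members), but whenever C is partitioned into two subfamilies C₀ and C₁, at least one of them fails to cover X. -/
/-- The combinatorial cover of `X = (ω+1)^ω ∪ (ω+1)^{<ω}` by the sets
`C_{σ⌢n} = {σ} ∪ {f ∈ (ω+1)^ω : σ⌢n ⊆ f}` is an `ω`-fold cover which cannot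
be split into two disjoint subcovers. Elements of `ω+1` are modelled by `ℕ∞`,
finite sequences by lists, and `σ⌢n ⊆ f` means `f` extends `σ ++ [n]`. -/
theorem stmt_18 (C : List ℕ∞ → ℕ∞ → Set ((ℕ → ℕ∞) ⊕ List ℕ∞))
    (hC : ∀ σ n, C σ n = {Sum.inr σ} ∪
      {x | ∃ f : ℕ → ℕ∞, x = Sum.inl f ∧
        ∀ j < (σ ++ [n]).length, f j = (σ ++ [n]).getD j 0}) :
    (∀ x : (ℕ → ℕ∞) ⊕ List ℕ∞, {p : List ℕ∞ × ℕ∞ | x ∈ C p.1 p.2}.Infinite) ∧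
    ∀ S : Set (List ℕ∞ × ℕ∞),
      ¬((∀ x, ∃ p ∈ S, x ∈ C p.1 p.2) ∧ (∀ x, ∃ p ∉ S, x ∈ C p.1 p.2)) := by
  constructor
  · intro x
    rcases x with f | σ
    · apply Set.infinite_of_injective_forall_mem
        (f := fun k : ℕ => (((List.range k).map f), f k))
      · intro a b hab
        have := congrArg (fun p : List ℕ∞ × ℕ∞ => p.1.length) hab
        simpa using this
      · intro k
        simp only [Set.mem_setOf_eq, hC, Set.mem_union, Set.mem_setOf_eq]
        right
        refine ⟨f, rfl, ?_⟩
        intro j hj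
        simp only [List.length_append, List.length_map, List.length_range,
          List.length_singleton] at hj
        rcases lt_or_eq_of_le (Nat.lt_succ_iff.mp hj) with h | h
        · rw [List.getD_append _ _ _ _ (by simpa using h)]
          rw [List.getD_eq_getElem _ _ (by simpa using h)]
          simp [h]
        · subst h
          rw [List.getD_append_right _ _ _ _ (by simp)]
          simp
    · apply Set.infinite_of_injective_forall_mem (f := fun n : ℕ∞ => (σ, n))
      · intro a b hab; simpa using hab
      · intro n
        simp [hC]
  · intro S
    rintro ⟨h1, h2⟩
    have hg : ∀ σ : List ℕ∞, ∃ n, (σ, n) ∉ S := by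
      intro σ
      obtain ⟨p, hpS, hpmem⟩ := h2 (Sum.inr σ)
      rw [hC] at hpmem
      rcases hpmem with h | ⟨f, hf, -⟩
      · have hp1 : p.1 = σ := by
          have : (Sum.inr σ : (ℕ → ℕ∞) ⊕ List ℕ∞) = Sum.inr p.1 := h
          exact (Sum.inr.injEq _ _ ▸ this).symm
        exact ⟨p.2, by rw [← hp1]; simpa using hpS⟩
      · exact absurd hf (by simp)
    choose g hgS using hg
    let seq : ℕ → List ℕ∞ := fun k => Nat.rec [] (fun _ s => s ++ [g s]) k
    have hstep : ∀ k, seq (k + 1) = seq k ++ [g (seq k)] := fun k => rfl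
    have hlen : ∀ k, (seq k).length = k := by
      intro k
      induction k with
      | zero => rfl
      | succ k ih => rw [hstep]; simp [ih]
    set f : ℕ → ℕ∞ := fun k => g (seq k) with hfdef
    have key : ∀ σ : List ℕ∞, (∀ j < σ.length, f j = σ.getD j 0) → σ = seq σ.length := by
      intro σ
      induction σ using List.reverseRecOn with
      | nil => intro _; rfl
      | append_singleton τ a ih =>
        intro h
        have hτ : τ = seq τ.length := by
          apply ih
          intro j hj
          have := h j (by simp; omega)
          rwa [List.getD_append _ _ _ _ hj] at this
        have ha : a = g (seq τ.length) := by
          have := h τ.length (by simp)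
          rw [List.getD_append_right _ _ _ _ le_rfl] at this
          simpa [hfdef] using this.symm
        rw [List.length_append, List.length_singleton, hstep, ← ha, ← hτ]
    obtain ⟨p, hpS, hpmem⟩ := h1 (Sum.inl f)
    rw [hC] at hpmem
    rcases hpmem with h | ⟨f', hf', hext⟩
    · exact absurd h (by simp)
    · have hff' : f' = f := by
        have := Sum.inl.injEq f f' ▸ hf'
        exact this.symm
      subst hff'
      have hp1 : p.1 = seq p.1.length := by
        apply key
        intro j hj
        have := hext j (by simp; omega)
        rwa [List.getD_append _ _ _ _ hj] at this
      have hp2 : p.2 = g (seq p.1.length) := by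
        have := hext p.1.length (by simp)
        rw [List.getD_append_right _ _ _ _ le_rfl] at this
        simpa [hfdef] using this.symm
      have : p ∉ S := by
        have : p = (seq p.1.length, g (seq p.1.length)) := by
          rw [← hp2, ← hp1]
        rw [this]
        exact hgS _
      exact this hpS
end
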